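/- arXiv:2410.13559 — 8 statements merged into one kernel-verified Lean document; each statement's English description precedes it below -/
import Mathlib

section
/- Let q be a real number with q ∈ (0,1) ∪ (1,2] ∪ [3,∞) and let x ∈ [0,1]. Then H_q(1/2)·4x(1−x) ≤ H_q(x). -/
open Set Real

/-- The `q`-Tsallis binary entropy `H_q(x) = (1 - x^q - (1-x)^q)/(q-1)` (real powers). -/
noncomputable def Hq (q x : ℝ) : ℝ := (1 - x ^ q - (1 - x) ^ q) / (q - 1)

namespace TsallisAux

lemma hderiv_add (r v : ℝ) (h : (1:ℝ) + v ≠ 0) :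
    HasDerivAt (fun y : ℝ => (1 + y) ^ r) (r * (1 + v) ^ (r - 1)) v := by
  have h1 : HasDerivAt (fun y : ℝ => 1 + y) 1 v := by
    simpa using (hasDerivAt_id v).const_add (1:ℝ)
  have := (Real.hasDerivAt_rpow_const (x := 1 + v) (p := r) (Or.inl h)).comp v h1
  exact this.congr_deriv (mul_one _)

lemma hderiv_sub (r v : ℝ) (h : (1:ℝ) - v ≠ 0) :
    HasDerivAt (fun y : ℝ => (1 - y) ^ r) (-(r * (1 - v) ^ (r - 1))) v := by
  have h1 : HasDerivAt (fun y : ℝ => 1 - y) (-1) v := by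
    simpa using (hasDerivAt_id v).const_sub (1:ℝ)
  have := (Real.hasDerivAt_rpow_const (x := 1 - v) (p := r) (Or.inl h)).comp v h1
  refine this.congr_deriv ?_
  ring

lemma c_add (r : ℝ) (s : Set ℝ) (h : ∀ v ∈ s, (1:ℝ) + v ≠ 0 ∨ 0 ≤ r) :
    ContinuousOn (fun v : ℝ => (1 + v) ^ r) s :=
  (continuous_const.add continuous_id).continuousOn.rpow_const h

lemma c_sub (r : ℝ) (s : Set ℝ) (h : ∀ v ∈ s, (1:ℝ) - v ≠ 0 ∨ 0 ≤ r) :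
    ContinuousOn (fun v : ℝ => (1 - v) ^ r) s :=
  (continuous_const.sub continuous_id).continuousOn.rpow_const h

lemma nonneg_aux (f f' : ℝ → ℝ) (hc : ContinuousOn f (Ico 0 1))
    (hd : ∀ v ∈ Ioo (0:ℝ) 1, HasDerivAt f (f' v) v) (h0 : f 0 = 0)
    (hs : ∀ v ∈ Ioo (0:ℝ) 1, 0 ≤ f' v) : ∀ v ∈ Ico (0:ℝ) 1, 0 ≤ f v := by
  have hmono : MonotoneOn f (Ico 0 1) := by
    apply monotoneOn_of_deriv_nonneg (convex_Ico 0 1) hc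
    · intro x hx
      rw [interior_Ico] at hx
      exact (hd x hx).differentiableAt.differentiableWithinAt
    · intro x hx
      rw [interior_Ico] at hx
      rw [(hd x hx).deriv]
      exact hs x hx
  intro v hv
  have h0m : (0:ℝ) ∈ Ico (0:ℝ) 1 := by constructor <;> norm_num
  simpa [h0] using hmono h0m hv hv.1

/-- The core chord inequality, with sign parameter `ε`. -/
lemma core (q ε : ℝ) (hq0 : 0 < q)
    (hsgn : ∀ v ∈ Ioo (0:ℝ) 1,
      0 ≤ ε * (q * (q-1) * (q-2) * ((1+v) ^ (q-3) - (1-v) ^ (q-3)))) :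
    ∀ v ∈ Icc (0:ℝ) 1,
      0 ≤ ε * (2 + ((2:ℝ) ^ q - 2) * v ^ 2 - ((1+v) ^ q + (1-v) ^ q)) := by
  set P : ℝ → ℝ := fun v => (1+v) ^ q + (1-v) ^ q with hP_def
  set P1 : ℝ → ℝ := fun v => q * (1+v) ^ (q-1) - q * (1-v) ^ (q-1) with hP1_def
  set P2 : ℝ → ℝ := fun v => q*(q-1) * (1+v) ^ (q-2) + q*(q-1) * (1-v) ^ (q-2) with hP2_def
  set D : ℝ → ℝ := fun v => v * P1 v - 2 * P v + 4 with hD_def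
  set D1 : ℝ → ℝ := fun v => v * P2 v - P1 v with hD1_def
  -- derivative facts on Ioo 0 1
  have hne : ∀ v ∈ Ioo (0:ℝ) 1, (1:ℝ) + v ≠ 0 ∧ (1:ℝ) - v ≠ 0 := by
    intro v hv
    constructor <;> [linarith [hv.1]; linarith [hv.2]] <;> skip
  have hP : ∀ v ∈ Ioo (0:ℝ) 1, HasDerivAt P (P1 v) v := by
    intro v hv
    have := (hderiv_add q v (hne v hv).1).add (hderiv_sub q v (hne v hv).2)
    refine this.congr_deriv ?_
    try simp [hP1_def]
    try ring
  have hP1 : ∀ v ∈ Ioo (0:ℝ) 1, HasDerivAt P1 (P2 v) v := by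
    intro v hv
    have ha := (hderiv_add (q-1) v (hne v hv).1).const_mul q
    have hb := (hderiv_sub (q-1) v (hne v hv).2).const_mul q
    have := ha.sub hb
    rw [show q - 1 - 1 = q - 2 by ring] at this
    refine this.congr_deriv ?_
    simp only [hP2_def]
    ring
  have hP2 : ∀ v ∈ Ioo (0:ℝ) 1, HasDerivAt P2
      (q*(q-1)*(q-2) * ((1+v) ^ (q-3) - (1-v) ^ (q-3))) v := by
    intro v hv
    have ha := (hderiv_add (q-2) v (hne v hv).1).const_mul (q*(q-1))
    have hb := (hderiv_sub (q-2) v (hne v hv).2).const_mul (q*(q-1))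
    have := ha.add hb
    rw [show q - 2 - 1 = q - 3 by ring] at this
    refine this.congr_deriv ?_
    ring
  have hD : ∀ v ∈ Ioo (0:ℝ) 1, HasDerivAt D (D1 v) v := by
    intro v hv
    have := (((hasDerivAt_id v).mul (hP1 v hv)).sub ((hP v hv).const_mul 2)).add_const 4
    refine this.congr_deriv ?_
    simp only [hD1_def, id_eq]
    ring
  have hD1 : ∀ v ∈ Ioo (0:ℝ) 1, HasDerivAt D1
      (v * (q*(q-1)*(q-2) * ((1+v) ^ (q-3) - (1-v) ^ (q-3)))) v := by
    intro v hv
    have := ((hasDerivAt_id v).mul (hP2 v hv)).sub (hP1 v hv)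
    refine this.congr_deriv ?_
    simp only [id_eq]
    ring
  -- continuity on Ico 0 1
  have hIco : ∀ (r : ℝ), ContinuousOn (fun v : ℝ => (1+v) ^ r) (Ico 0 1) ∧
      ContinuousOn (fun v : ℝ => (1-v) ^ r) (Ico 0 1) := by
    intro r
    constructor
    · exact c_add r _ (fun v hv => Or.inl (by have := hv.1; intro h; linarith))
    · exact c_sub r _ (fun v hv => Or.inl (by have := hv.2; intro h; linarith))
  have hcP1 : ContinuousOn P1 (Ico 0 1) :=
    (continuousOn_const.mul (hIco (q-1)).1).sub (continuousOn_const.mul (hIco (q-1)).2)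
  have hcP2 : ContinuousOn P2 (Ico 0 1) :=
    (continuousOn_const.mul (hIco (q-2)).1).add (continuousOn_const.mul (hIco (q-2)).2)
  have hcP : ContinuousOn P (Ico 0 1) := (hIco q).1.add (hIco q).2
  -- Step 1 : 0 ≤ ε * D1 on Ico 0 1
  have step1 : ∀ v ∈ Ico (0:ℝ) 1, 0 ≤ ε * D1 v := by
    apply nonneg_aux (fun v => ε * D1 v)
      (fun v => ε * (v * (q*(q-1)*(q-2) * ((1+v) ^ (q-3) - (1-v) ^ (q-3)))))
    · exact continuousOn_const.mul ((continuousOn_id.mul hcP2).sub hcP1)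
    · intro v hv
      exact (hD1 v hv).const_mul ε
    · simp [hD1_def, hP1_def]
    · intro v hv
      have h := hsgn v hv
      have : ε * (v * (q*(q-1)*(q-2) * ((1+v) ^ (q-3) - (1-v) ^ (q-3))))
          = v * (ε * (q*(q-1)*(q-2) * ((1+v) ^ (q-3) - (1-v) ^ (q-3)))) := by ring
      rw [this]
      exact mul_nonneg hv.1.le h
  -- Step 2 : 0 ≤ ε * D on Ico 0 1
  have step2 : ∀ v ∈ Ico (0:ℝ) 1, 0 ≤ ε * D v := by
    apply nonneg_aux (fun v => ε * D v) (fun v => ε * D1 v)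
    · exact continuousOn_const.mul
        (((continuousOn_id.mul hcP1).sub (continuousOn_const.mul hcP)).add continuousOn_const)
    · intro v hv
      exact (hD v hv).const_mul ε
    · show ε * D 0 = 0
      have hD0 : D 0 = 0 := by
        norm_num [hD_def, hP_def, hP1_def, Real.one_rpow]
      rw [hD0, mul_zero]
    · intro v hv
      exact step1 v (Ioo_subset_Ico_self hv)
  -- Step 3 : monotone R on Ioc 0 1
  set R : ℝ → ℝ := fun v => (P v - 2) / v ^ 2 with hR_def
  have hRd : ∀ v ∈ Ioo (0:ℝ) 1, HasDerivAt (fun v => ε * R v)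
      (ε * (v * D v / (v ^ 2) ^ 2)) v := by
    intro v hv
    have hv2 : (v:ℝ) ^ 2 ≠ 0 := pow_ne_zero 2 (ne_of_gt hv.1)
    have hsq : HasDerivAt (fun v : ℝ => v ^ 2) (2 * v) v := by
      simpa using hasDerivAt_pow 2 v
    have h' := (((hP v hv).sub_const 2).div hsq hv2).const_mul ε
    have heq : ε * ((P1 v * v ^ 2 - (P v - 2) * (2 * v)) / (v ^ 2) ^ 2)
        = ε * (v * D v / (v ^ 2) ^ 2) := by
      simp only [hD_def]
      ring
    rw [heq] at h'
    exact h'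
  have hmonoR : MonotoneOn (fun v => ε * R v) (Ioc 0 1) := by
    apply monotoneOn_of_deriv_nonneg (convex_Ioc 0 1)
    · apply continuousOn_const.mul
      apply ContinuousOn.div
      · apply ContinuousOn.sub _ continuousOn_const
        apply ContinuousOn.add
        · exact c_add q _ (fun v hv => Or.inr hq0.le)
        · exact c_sub q _ (fun v hv => Or.inr hq0.le)
      · exact (continuous_pow 2).continuousOn
      · intro v hv
        exact pow_ne_zero 2 (ne_of_gt hv.1)
    · intro v hv
      rw [interior_Ioc] at hv
      exact (hRd v hv).differentiableAt.differentiableWithinAt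
    · intro v hv
      rw [interior_Ioc] at hv
      rw [(hRd v hv).deriv]
      have h1 : 0 ≤ ε * D v := step2 v (Ioo_subset_Ico_self hv)
      have h2 : 0 ≤ v / (v ^ 2) ^ 2 := div_nonneg hv.1.le (by positivity)
      have : ε * (v * D v / (v ^ 2) ^ 2) = (ε * D v) * (v / (v ^ 2) ^ 2) := by ring
      rw [this]
      exact mul_nonneg h1 h2
  -- conclude
  intro v hv
  rcases eq_or_lt_of_le hv.1 with h0 | h0
  · rw [← h0]
    norm_num [Real.one_rpow]
  · have hmem : v ∈ Ioc (0:ℝ) 1 := ⟨h0, hv.2⟩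
    have h1mem : (1:ℝ) ∈ Ioc (0:ℝ) 1 := ⟨one_pos, le_refl 1⟩
    have hR1 : R 1 = (2:ℝ) ^ q - 2 := by
      have hP1v : P 1 = (2:ℝ) ^ q := by
        simp only [hP_def]
        rw [show (1:ℝ) + 1 = 2 by norm_num, show (1:ℝ) - 1 = 0 by norm_num,
          Real.zero_rpow (ne_of_gt hq0), add_zero]
      simp [hR_def, hP1v]
    have hcomp : ε * R v ≤ ε * R 1 := hmonoR hmem h1mem hv.2
    rw [hR1] at hcomp
    have this := hcomp
    have hv2 : (0:ℝ) < v ^ 2 := by positivity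
    have h2 : ε * (P v - 2) ≤ ε * ((2:ℝ) ^ q - 2) * v ^ 2 := by
      rw [show ε * R v = (ε * (P v - 2)) / v ^ 2 by rw [hR_def]; ring] at this
      exact (div_le_iff₀ hv2).mp this
    have hPv : P v = (1+v) ^ q + (1-v) ^ q := rfl
    rw [hPv] at h2
    nlinarith [h2]

end TsallisAux

open TsallisAux in
lemma tsallis_aux (q x : ℝ)
    (hq : (0 < q ∧ q < 1) ∨ (1 < q ∧ q ≤ 2) ∨ 3 ≤ q)
    (hx : x ∈ Set.Icc (1/2 : ℝ) 1) :
    Hq q (1 / 2) * (4 * x * (1 - x)) ≤ Hq q x := by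
  have hq0 : 0 < q := by rcases hq with h | h | h <;> [exact h.1; linarith [h.1]; linarith]
  set v := 2 * x - 1 with hv
  have hvmem : v ∈ Set.Icc (0:ℝ) 1 := ⟨by simp [hv]; linarith [hx.1], by simp [hv]; linarith [hx.2]⟩
  have hbase : ∀ w ∈ Set.Ioo (0:ℝ) 1, (0:ℝ) < 1 - w ∧ (1:ℝ) - w ≤ 1 + w := by
    intro w hw
    constructor <;> [linarith [hw.2]; linarith [hw.1]]
  -- key inequality
  have hxeq : x = (1 + v) / 2 := by rw [hv]; ring
  have h1xeq : 1 - x = (1 - v) / 2 := by rw [hv]; ring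
  have hxq : x ^ q = (1+v) ^ q / 2 ^ q := by
    rw [hxeq, Real.div_rpow (by linarith [hvmem.1]) (by norm_num)]
  have h1xq : (1-x) ^ q = (1-v) ^ q / 2 ^ q := by
    rw [h1xeq, Real.div_rpow (by linarith [hvmem.2]) (by norm_num)]
  have h12q : (1/2 : ℝ) ^ q = 1 / 2 ^ q := by
    rw [Real.div_rpow (by norm_num) (by norm_num), Real.one_rpow]
  have hA : (0:ℝ) < 2 ^ q := Real.rpow_pos_of_pos two_pos q
  have ht : 4 * x * (1 - x) = 1 - v ^ 2 := by rw [hv]; ring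
  unfold Hq
  rw [hxq, h1xq, show (1:ℝ) - 1/2 = 1/2 by norm_num, h12q, ht, div_mul_eq_mul_div]
  rcases hq with ⟨hq0', hq1⟩ | hq'
  · -- 0 < q < 1 : ε = -1
    have key := core q (-1) hq0 ?_ v hvmem
    · rw [div_le_div_right_of_neg (by linarith : q - 1 < 0)]
      rw [← sub_nonneg]
      have hAne : (2:ℝ) ^ q ≠ 0 := ne_of_gt hA
      have expand : (1 - 1 / 2 ^ q - 1 / 2 ^ q) * (1 - v ^ 2) - (1 - (1 + v) ^ q / 2 ^ q - (1 - v) ^ q / 2 ^ q)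
          = (-1 * (2 + ((2:ℝ) ^ q - 2) * v ^ 2 - ((1 + v) ^ q + (1 - v) ^ q))) / 2 ^ q := by
        field_simp
        ring
      rw [expand]
      exact div_nonneg key hA.le
    · intro w hw
      have hb := hbase w hw
      have hexp : q - 3 ≤ 0 := by linarith
      have hcmp : (1+w) ^ (q-3) ≤ (1-w) ^ (q-3) :=
        Real.rpow_le_rpow_of_nonpos hb.1 hb.2 hexp
      have hcoef : 0 < q * (q-1) * (q-2) := by
        nlinarith [mul_pos hq0 (mul_pos (show (0:ℝ) < 1 - q by linarith) (show (0:ℝ) < 2 - q by linarith))]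
      nlinarith [mul_nonneg hcoef.le (sub_nonneg.2 hcmp)]
  · -- q > 1 : ε = 1
    have hq1 : 1 < q := by rcases hq' with h | h <;> [exact h.1; linarith]
    have key := core q 1 hq0 ?_ v hvmem
    · rw [div_le_div_iff_of_pos_right (by linarith : (0:ℝ) < q - 1)]
      rw [← sub_nonneg]
      have hAne : (2:ℝ) ^ q ≠ 0 := ne_of_gt hA
      have expand : (1 - (1 + v) ^ q / 2 ^ q - (1 - v) ^ q / 2 ^ q) - (1 - 1 / 2 ^ q - 1 / 2 ^ q) * (1 - v ^ 2)
          = (1 * (2 + ((2:ℝ) ^ q - 2) * v ^ 2 - ((1 + v) ^ q + (1 - v) ^ q))) / 2 ^ q := by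
        field_simp
        ring
      rw [expand]
      exact div_nonneg key hA.le
    · intro w hw
      have hb := hbase w hw
      rcases hq' with ⟨_, hq2⟩ | hq3
      · have hcmp : (1+w) ^ (q-3) ≤ (1-w) ^ (q-3) :=
          Real.rpow_le_rpow_of_nonpos hb.1 hb.2 (by linarith)
        have hcoef : q * (q-1) * (q-2) ≤ 0 := by
          nlinarith [mul_nonneg (mul_pos hq0 (show (0:ℝ) < q - 1 by linarith)).le (show (0:ℝ) ≤ 2 - q by linarith)]
        nlinarith [mul_nonneg (neg_nonneg.2 hcoef) (sub_nonneg.2 hcmp)]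
      · have hcmp : (1-w) ^ (q-3) ≤ (1+w) ^ (q-3) :=
          Real.rpow_le_rpow (by linarith [hb.1]) hb.2 (by linarith)
        have hcoef : 0 ≤ q * (q-1) * (q-2) := by
          nlinarith [mul_nonneg (mul_pos hq0 (show (0:ℝ) < q - 1 by linarith)).le (show (0:ℝ) ≤ q - 2 by linarith)]
        nlinarith [mul_nonneg hcoef (sub_nonneg.2 hcmp)]

theorem tsallis_binary_entropy_lower_bound (q x : ℝ)
    (hq : (0 < q ∧ q < 1) ∨ (1 < q ∧ q ≤ 2) ∨ 3 ≤ q)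
    (hx : x ∈ Set.Icc (0 : ℝ) 1) :
    Hq q (1 / 2) * (4 * x * (1 - x)) ≤ Hq q x := by
  have hsym : ∀ y : ℝ, Hq q (1 - y) = Hq q y := by
    intro y
    unfold Hq
    rw [sub_sub_cancel]
    ring
  rcases le_total (1/2 : ℝ) x with h | h
  · exact tsallis_aux q x hq ⟨h, hx.2⟩
  · have := tsallis_aux q (1 - x) hq ⟨by linarith, by linarith [hx.1]⟩
    rw [hsym] at this
    have e : 4 * (1-x) * (1 - (1-x)) = 4 * x * (1-x) := by ring
    rw [e] at this
    exact this
end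

section
/- Let q be a real number with 1 < q ≤ 2 and let x ∈ [0,1]. Then H_q(x) ≤ H_q(1/2)·√(4x(1−x)). -/
set_option maxHeartbeats 1000000

open Real Set

lemma logsinh_concave : ConcaveOn ℝ (Set.Ioi (0:ℝ)) (fun x => Real.log (Real.sinh x)) := by
  have hderiv : ∀ x ∈ Set.Ioi (0:ℝ), HasDerivAt (fun x => Real.log (Real.sinh x))
      (Real.cosh x / Real.sinh x) x := by
    intro x hx
    have hs : Real.sinh x ≠ 0 := (Real.sinh_pos_iff.2 hx).ne'
    simpa [div_eq_mul_inv, mul_comm] using (Real.hasDerivAt_sinh x).log hs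
  have hds : ∀ x ∈ Set.Ioi (0:ℝ), deriv (fun x => Real.log (Real.sinh x)) x
      = Real.cosh x / Real.sinh x := fun x hx => (hderiv x hx).deriv
  apply AntitoneOn.concaveOn_of_deriv (convex_Ioi 0)
  · intro x hx
    exact ((hderiv x hx).continuousAt).continuousWithinAt
  · rw [interior_Ioi]
    intro x hx
    exact ((hderiv x hx).differentiableAt).differentiableWithinAt
  · rw [interior_Ioi]
    intro x hx y hy hxy
    rw [hds x hx, hds y hy]
    have hsx := Real.sinh_pos_iff.2 hx
    have hsy := Real.sinh_pos_iff.2 hy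
    rw [div_le_div_iff₀ hsy hsx]
    have h : 0 ≤ Real.sinh (y - x) := Real.sinh_nonneg_iff.2 (by linarith)
    rw [Real.sinh_sub] at h
    nlinarith [Real.cosh_pos (x := y), Real.cosh_pos (x := x)]

lemma sinh_interp {θ q : ℝ} (hθ : 0 < θ) (hq1 : 1 ≤ q) (hq2 : q ≤ 2) :
    Real.sinh θ ^ (2 - q) * Real.sinh (2*θ) ^ (q - 1) ≤ Real.sinh (q*θ) := by
  have h := logsinh_concave.2 (Set.mem_Ioi.2 hθ)
    (Set.mem_Ioi.2 (by linarith : (0:ℝ) < 2*θ))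
    (by linarith : (0:ℝ) ≤ 2 - q) (by linarith : (0:ℝ) ≤ q - 1) (by ring)
  have heq : (2-q) * θ + (q-1) * (2*θ) = q * θ := by ring
  simp only [smul_eq_mul] at h
  rw [heq] at h
  have hsθ := Real.sinh_pos_iff.2 hθ
  have hs2θ := Real.sinh_pos_iff.2 (by linarith : (0:ℝ) < 2*θ)
  have hsqθ := Real.sinh_pos_iff.2 (by nlinarith : (0:ℝ) < q*θ)
  rw [← Real.log_rpow hsθ (2-q), ← Real.log_rpow hs2θ (q-1),
    ← Real.log_mul (Real.rpow_pos_of_pos hsθ _).ne' (Real.rpow_pos_of_pos hs2θ _).ne'] at h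
  exact (Real.log_le_log_iff (by positivity) hsqθ).1 h

/-- Core hyperbolic inequality. -/
lemma cosh_rpow_le {θ q : ℝ} (hθ : 0 ≤ θ) (hq1 : 1 ≤ q) (hq2 : q ≤ 2) :
    (2 * Real.cosh θ) ^ q ≤ 2 * Real.cosh (q*θ) + 2 ^ q - 2 := by
  set G : ℝ → ℝ := fun t => 2 * Real.cosh (q*t) + 2 ^ q - 2 - (2 * Real.cosh t) ^ q with hG
  have hd : ∀ t : ℝ, HasDerivAt G
      (2 * (Real.sinh (q*t) * q) - 2 * Real.sinh t * q * (2 * Real.cosh t) ^ (q-1)) t := by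
    intro t
    have h1 : HasDerivAt (fun t => Real.cosh (q*t)) (Real.sinh (q*t) * q) t := by
      simpa using ((hasDerivAt_id t).const_mul q).cosh
    have hc : HasDerivAt (fun t => 2 * Real.cosh t) (2 * Real.sinh t) t :=
      (Real.hasDerivAt_cosh t).const_mul 2
    have h2 : HasDerivAt (fun t => (2 * Real.cosh t) ^ q)
        (2 * Real.sinh t * q * (2 * Real.cosh t) ^ (q-1)) t :=
      hc.rpow_const (Or.inr hq1)
    exact (((h1.const_mul 2).add_const ((2:ℝ)^q)).sub_const 2).sub h2
  have hmono : MonotoneOn G (Set.Ici (0:ℝ)) := by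
    apply monotoneOn_of_deriv_nonneg (convex_Ici 0)
    · exact fun t _ => ((hd t).continuousAt).continuousWithinAt
    · rw [interior_Ici]
      exact fun t _ => ((hd t).differentiableAt).differentiableWithinAt
    · rw [interior_Ici]
      intro t ht
      rw [(hd t).deriv]
      have ht' : (0:ℝ) < t := ht
      have hst := Real.sinh_pos_iff.2 ht'
      have hct := Real.cosh_pos (x := t)
      have key : Real.sinh t * (2 * Real.cosh t) ^ (q-1) ≤ Real.sinh (q*t) := by
        have h := sinh_interp ht' hq1 hq2
        have h2s : Real.sinh (2*t) = Real.sinh t * (2 * Real.cosh t) := by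
          rw [Real.sinh_two_mul]; ring
        rw [h2s, Real.mul_rpow hst.le (by positivity)] at h
        calc Real.sinh t * (2 * Real.cosh t) ^ (q-1)
            = Real.sinh t ^ (2-q) * (Real.sinh t ^ (q-1) * (2 * Real.cosh t) ^ (q-1)) := by
              rw [← mul_assoc, ← Real.rpow_add hst]; norm_num
          _ ≤ Real.sinh (q*t) := h
      nlinarith [Real.rpow_pos_of_pos (by positivity : (0:ℝ) < 2 * Real.cosh t) (q-1)]
  have h0 : G 0 = 0 := by simp [hG, Real.cosh_zero]
  have hle := hmono (Set.self_mem_Ici) (Set.mem_Ici.2 hθ) hθ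
  rw [h0] at hle
  simp only [hG] at hle
  linarith

/-- Key algebraic inequality for 1/2 ≤ x < 1. -/
lemma key_half {x q : ℝ} (hx1 : 1/2 ≤ x) (hx2 : x < 1) (hq1 : 1 ≤ q) (hq2 : q ≤ 2) :
    1 ≤ x ^ q + (1-x) ^ q + (2 ^ q - 2) * (x*(1-x)) ^ (q/2) := by
  have hx0 : (0:ℝ) < x := by linarith
  have hy0 : (0:ℝ) < 1 - x := by linarith
  set sx := Real.sqrt x with hsx
  set sy := Real.sqrt (1-x) with hsy
  have hsx0 : 0 < sx := Real.sqrt_pos.2 hx0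
  have hsy0 : 0 < sy := Real.sqrt_pos.2 hy0
  have hsx2 : sx * sx = x := Real.mul_self_sqrt hx0.le
  have hsy2 : sy * sy = 1 - x := Real.mul_self_sqrt hy0.le
  set u := sx / sy with hu
  have hu0 : 0 < u := div_pos hsx0 hsy0
  have hu1 : 1 ≤ u := by
    rw [hu, le_div_iff₀ hsy0, one_mul]
    exact Real.sqrt_le_sqrt (by linarith)
  set θ := Real.log u with hθ
  have hθ0 : 0 ≤ θ := Real.log_nonneg hu1
  have hexp : Real.exp θ = u := Real.exp_log hu0
  have hcosh : 2 * Real.cosh θ = u + u⁻¹ := by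
    rw [Real.cosh_eq, Real.exp_neg, hexp]; ring
  have hcoshq : 2 * Real.cosh (q*θ) = u ^ q + (u ^ q)⁻¹ := by
    rw [Real.cosh_eq, Real.exp_neg,
      show Real.exp (q*θ) = u ^ q by rw [Real.rpow_def_of_pos hu0, hθ, mul_comm]]
    ring
  have hkey := cosh_rpow_le hθ0 hq1 hq2
  rw [hcosh, hcoshq] at hkey
  have hinv : u + u⁻¹ = (sx*sy)⁻¹ := by
    rw [hu, inv_div, div_add_div _ _ hsy0.ne' hsx0.ne',
      show sx*sx + sy*sy = 1 by linarith, mul_comm sy sx, one_div]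
  rw [hinv, Real.inv_rpow (by positivity)] at hkey
  have hg0 : (0:ℝ) < (sx*sy) ^ q := Real.rpow_pos_of_pos (by positivity) q
  have hstep : 1 ≤ (sx*sy) ^ q * (u ^ q + (u ^ q)⁻¹ + 2 ^ q - 2) := by
    have h2 : (sx*sy) ^ q * ((sx*sy) ^ q)⁻¹ = 1 := mul_inv_cancel₀ hg0.ne'
    nlinarith [mul_le_mul_of_nonneg_left hkey hg0.le]
  have hgu : sx*sy*u = x := by
    rw [hu]; field_simp; nlinarith
  have hgu' : sx*sy*u⁻¹ = 1-x := by
    rw [hu, inv_div]; field_simp; nlinarith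
  have h1 : (sx*sy) ^ q * u ^ q = x ^ q := by
    rw [← Real.mul_rpow (by positivity) hu0.le, hgu]
  have h2 : (sx*sy) ^ q * (u ^ q)⁻¹ = (1-x) ^ q := by
    rw [← Real.inv_rpow hu0.le, ← Real.mul_rpow (by positivity) (by positivity), hgu']
  have h3 : (sx*sy) ^ q = (x*(1-x)) ^ (q/2) := by
    have hg : sx*sy = (x*(1-x)) ^ (1/2 : ℝ) := by
      rw [← Real.sqrt_eq_rpow, hsx, hsy, ← Real.sqrt_mul hx0.le]
    rw [hg, ← Real.rpow_mul (by positivity)]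
    congr 1; ring
  calc (1:ℝ) ≤ (sx*sy) ^ q * (u ^ q + (u ^ q)⁻¹ + 2 ^ q - 2) := hstep
    _ = (sx*sy) ^ q * u ^ q + (sx*sy) ^ q * (u ^ q)⁻¹ + (2 ^ q - 2) * (sx*sy) ^ q := by ring
    _ = x ^ q + (1-x) ^ q + (2 ^ q - 2) * (x*(1-x)) ^ (q/2) := by rw [h1, h2, h3]

lemma key_all {x q : ℝ} (hx0 : 0 ≤ x) (hx1 : x ≤ 1) (hq1 : 1 ≤ q) (hq2 : q ≤ 2) :
    1 ≤ x ^ q + (1-x) ^ q + (2 ^ q - 2) * (x*(1-x)) ^ (q/2) := by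
  have hq0 : q ≠ 0 := by linarith
  have hq2' : q/2 ≠ 0 := fun h => hq0 (by linarith)
  rcases eq_or_lt_of_le hx0 with h0 | h0
  · simp [← h0, Real.zero_rpow hq0, Real.zero_rpow hq2']
  rcases eq_or_lt_of_le hx1 with h1 | h1
  · simp [h1, Real.zero_rpow hq0, Real.zero_rpow hq2']
  rcases le_total (1/2 : ℝ) x with hh | hh
  · exact key_half hh h1 hq1 hq2
  · have h := key_half (x := 1-x) (by linarith) (by linarith) hq1 hq2
    have e1 : (1 : ℝ) - (1-x) = x := by ring
    rw [e1, mul_comm (1-x) x] at h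
    linarith

theorem tsallis_binary_entropy_upper_bound (q x : ℝ)
    (hq1 : 1 < q) (hq2 : q ≤ 2) (hx : x ∈ Set.Icc (0 : ℝ) 1) :
    Hq q x ≤ Hq q (1 / 2) * Real.sqrt (4 * x * (1 - x)) := by
  obtain ⟨hx0, hx1⟩ := hx
  have hq0 : (0:ℝ) < q - 1 := by linarith
  have hkey := key_all hx0 hx1 hq1.le hq2
  -- c := 1 - 2*(1/2)^q ≥ 0
  have hhalf : ((1:ℝ)/2) ^ q ≤ 1/2 := by
    calc ((1:ℝ)/2) ^ q ≤ ((1:ℝ)/2) ^ (1:ℝ) :=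
          Real.rpow_le_rpow_of_exponent_ge (by norm_num) (by norm_num) hq1.le
      _ = 1/2 := Real.rpow_one _
  have hc0 : 0 ≤ 1 - 2*((1:ℝ)/2) ^ q := by linarith
  -- (2^q - 2) * (x(1-x))^(q/2) = c * (4x(1-x))^(q/2)
  have h4 : ((4:ℝ) * x * (1-x)) ^ (q/2) = 2 ^ q * (x*(1-x)) ^ (q/2) := by
    rw [mul_assoc, Real.mul_rpow (by norm_num) (by nlinarith)]
    congr 1
    rw [show (4:ℝ) = (2:ℝ) ^ (2:ℝ) by
        rw [show ((2:ℝ):ℝ) = ((2:ℕ):ℝ) by norm_num, Real.rpow_natCast]; norm_num,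
      ← Real.rpow_mul (by norm_num)]
    congr 1; ring
  have hcq : (1 - 2*((1:ℝ)/2) ^ q) * 2 ^ q = 2 ^ q - 2 := by
    have : ((1:ℝ)/2) ^ q * 2 ^ q = 1 := by
      rw [← Real.mul_rpow (by norm_num) (by norm_num)]
      norm_num
    nlinarith
  -- b := 4x(1-x) ∈ [0,1], so b^(q/2) ≤ b^(1/2) = sqrt b
  have hb0 : (0:ℝ) ≤ 4 * x * (1-x) := by nlinarith
  have hb1 : (4:ℝ) * x * (1-x) ≤ 1 := by nlinarith [sq_nonneg (2*x-1)]
  have hbb : ((4:ℝ) * x * (1-x)) ^ (q/2) ≤ Real.sqrt (4 * x * (1-x)) := by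
    rw [Real.sqrt_eq_rpow]
    rcases eq_or_lt_of_le hb0 with hb | hb
    · rw [← hb, Real.zero_rpow (by positivity : q/2 ≠ 0),
        Real.zero_rpow (by norm_num : (1:ℝ)/2 ≠ 0)]
    · exact Real.rpow_le_rpow_of_exponent_ge hb hb1 (by linarith)
  -- assemble
  have hA : 1 - x ^ q - (1-x) ^ q ≤
      (1 - 2*((1:ℝ)/2) ^ q) * Real.sqrt (4 * x * (1-x)) := by
    have e : (2 ^ q - 2) * (x*(1-x)) ^ (q/2)
        = (1 - 2*((1:ℝ)/2) ^ q) * ((4:ℝ) * x * (1-x)) ^ (q/2) := by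
      rw [h4, ← mul_assoc, hcq]
    have := mul_le_mul_of_nonneg_left hbb hc0
    linarith
  show (1 - x ^ q - (1-x) ^ q) / (q-1) ≤
      (1 - (1/2:ℝ) ^ q - (1 - 1/2:ℝ) ^ q) / (q-1) * Real.sqrt (4 * x * (1-x))
  rw [show (1:ℝ) - 1/2 = 1/2 by norm_num, div_mul_eq_mul_div,
    show (1:ℝ) - (1/2:ℝ) ^ q - (1/2:ℝ) ^ q = 1 - 2*((1:ℝ)/2) ^ q by ring]
  gcongr
end

section
/- Let N ≥ 2 be an integer, let q > 1 be a real number, and let p be a probability distribution over [N]. Then (1 − TV(p,ν) − 1/N)·ln_q(N) ≤ H_q(p). -/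
open scoped BigOperators

/-- The `q`-Tsallis entropy of a probability distribution `p` over `Fin N`,
`H_q(p) = (1 - ∑ i, p i ^ q) / (q - 1)` (real powers). -/
noncomputable def tsallisEntropy {N : ℕ} (q : ℝ) (p : Fin N → ℝ) : ℝ :=
  (1 - ∑ i, p i ^ q) / (q - 1)

/-- The total variation distance `TV(p₀,p₁) = (1/2) ∑ i, |p₀ i - p₁ i|`. -/
noncomputable def TV {N : ℕ} (p₀ p₁ : Fin N → ℝ) : ℝ :=
  (1 / 2) * ∑ i, |p₀ i - p₁ i|

/-- The `q`-logarithm `ln_q(x) = (1 - x^(1-q))/(q-1)` (real powers). -/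
noncomputable def lnq (q x : ℝ) : ℝ := (1 - x ^ (1 - q)) / (q - 1)

lemma pointwise_bound (q c : ℝ) (hq : 1 < q) (hc0 : 0 < c) (hc1 : c < 1)
    (x : ℝ) (hx0 : 0 ≤ x) (hx1 : x ≤ 1) :
    x ^ q - x + (1 - c ^ (q - 1)) * min x c ≤ (c - c ^ q) / (1 - c) * max (x - c) 0 := by
  have h1c : (0:ℝ) < 1 - c := by linarith
  have hcq : c ^ q = c * c ^ (q - 1) := by
    have : c ^ (1 + (q - 1)) = c * c ^ (q - 1) := Real.rpow_one_add' hc0.le (by linarith)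
    simpa using this
  rcases le_or_gt x c with h | h
  · rw [min_eq_left h, max_eq_right (by linarith)]
    have hxq : x ^ q ≤ c ^ (q - 1) * x := by
      rcases eq_or_lt_of_le hx0 with h0 | h0
      · rw [← h0, Real.zero_rpow (by positivity)]; simp
      · have hx' : x ^ q = x * x ^ (q - 1) := by
          have : x ^ (1 + (q - 1)) = x * x ^ (q - 1) := Real.rpow_one_add' hx0 (by linarith)
          simpa using this
        rw [hx']
        have : x ^ (q - 1) ≤ c ^ (q - 1) := Real.rpow_le_rpow hx0 h (by linarith)
        nlinarith
    nlinarith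
  · rw [min_eq_right h.le, max_eq_left (by linarith)]
    set t : ℝ := (1 - x) / (1 - c) with ht
    have ht0 : 0 ≤ t := div_nonneg (by linarith) h1c.le
    have ht1 : t ≤ 1 := by rw [div_le_one h1c]; linarith
    have ht1' : (0:ℝ) ≤ 1 - t := by linarith
    have hsum : t + (1 - t) = 1 := by ring
    have hx : t * c + (1 - t) * 1 = x := by rw [ht]; field_simp; ring
    have hconv := (convexOn_rpow hq.le).2 (Set.mem_Ici.2 hc0.le) (Set.mem_Ici.2 zero_le_one)
      ht0 ht1' hsum
    simp only [smul_eq_mul, Real.one_rpow, hx] at hconv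
    have htx : t * (1 - c) = 1 - x := by rw [ht]; field_simp
    have hxc : x - c = (1 - t) * (1 - c) := by linear_combination htx
    have hkey : (c - c ^ q) / (1 - c) * (x - c) = (1 - t) * (c - c ^ q) := by
      rw [hxc]; field_simp
    nlinarith [hconv, hkey, hcq, hx]

theorem tsallis_entropy_lower_bound_by_tv (N : ℕ) (hN : 2 ≤ N) (q : ℝ) (hq : 1 < q)
    (p : Fin N → ℝ) (hp0 : ∀ i, 0 ≤ p i) (hp1 : ∑ i, p i = 1) :
    (1 - TV p (fun _ => 1 / (N : ℝ)) - 1 / (N : ℝ)) * lnq q (N : ℝ) ≤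
      tsallisEntropy q p := by
  have hN2 : (2:ℝ) ≤ (N:ℝ) := by exact_mod_cast hN
  set c : ℝ := 1 / (N:ℝ) with hc
  have hc0 : 0 < c := by positivity
  have hc1 : c < 1 := by rw [hc, div_lt_one (by linarith)]; linarith
  have h1c : (0:ℝ) < 1 - c := by linarith
  have hq1 : (0:ℝ) < q - 1 := by linarith
  have hNc : (N:ℝ) * c = 1 := by rw [hc]; field_simp
  have hple : ∀ i, p i ≤ 1 := by
    intro i
    rw [← hp1]
    exact Finset.single_le_sum (fun j _ => hp0 j) (Finset.mem_univ i)
  set T : ℝ := ∑ i, max (p i - c) 0 with hT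
  have hT0 : 0 ≤ T := Finset.sum_nonneg fun i _ => le_max_right _ _
  have hMin : ∑ i, min (p i) c = 1 - T := by
    have h1 : ∀ i, min (p i) c = p i - max (p i - c) 0 := by
      intro i
      rcases le_total (p i) c with h | h
      · rw [min_eq_left h, max_eq_right (by linarith)]; ring
      · rw [min_eq_right h, max_eq_left (by linarith)]; ring
    rw [Finset.sum_congr rfl fun i _ => h1 i, Finset.sum_sub_distrib, hp1, ← hT]
  have hTV : TV p (fun _ => c) = T := by
    have h1 : ∀ i, |p i - c| = 2 * max (p i - c) 0 - (p i - c) := by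
      intro i
      rcases le_total (p i - c) 0 with h | h
      · rw [abs_of_nonpos h, max_eq_right h]; ring
      · rw [abs_of_nonneg h, max_eq_left h]; ring
    have h2 : ∑ i, (p i - c) = 0 := by
      rw [Finset.sum_sub_distrib, hp1, Finset.sum_const, Finset.card_univ, Fintype.card_fin,
        nsmul_eq_mul, hNc]
      ring
    rw [TV, Finset.sum_congr rfl fun i _ => h1 i, Finset.sum_sub_distrib, h2,
      ← Finset.mul_sum, ← hT]
    ring
  have hTle : T ≤ 1 - c := by
    have hmc : c ≤ ∑ i, min (p i) c := by
      by_cases hex : ∃ j, c ≤ p j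
      · obtain ⟨j, hj⟩ := hex
        calc c = min (p j) c := (min_eq_right hj).symm
          _ ≤ ∑ i, min (p i) c :=
            Finset.single_le_sum (fun i _ => le_min (hp0 i) hc0.le) (Finset.mem_univ j)
      · push_neg at hex
        have : ∑ i, min (p i) c = 1 := by
          rw [Finset.sum_congr rfl fun i _ => min_eq_left (hex i).le, hp1]
        linarith
    linarith [hMin]
  have hcq1 : c ^ (q - 1) ≤ 1 := Real.rpow_le_one hc0.le hc1.le (by linarith)
  have hcq : c ^ q = c * c ^ (q - 1) := by
    have : c ^ (1 + (q - 1)) = c * c ^ (q - 1) := Real.rpow_one_add' hc0.le (by linarith)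
    simpa using this
  have hccq : 0 ≤ c - c ^ q := by nlinarith
  have key : ∑ i, (p i ^ q - p i + (1 - c ^ (q - 1)) * min (p i) c) ≤
      ∑ i, (c - c ^ q) / (1 - c) * max (p i - c) 0 :=
    Finset.sum_le_sum fun i _ => pointwise_bound q c hq hc0 hc1 (p i) (hp0 i) (hple i)
  have hS : ∑ i, p i ^ q ≤ 1 - (1 - c ^ (q - 1)) * (1 - T) + (c - c ^ q) / (1 - c) * T := by
    rw [Finset.sum_add_distrib, Finset.sum_sub_distrib, hp1, ← Finset.mul_sum, hMin,
      ← Finset.mul_sum, ← hT] at key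
    linarith
  have hDT : (c - c ^ q) / (1 - c) * T ≤ c - c ^ q := by
    rw [div_mul_eq_mul_div, div_le_iff₀ h1c]
    nlinarith [mul_le_mul_of_nonneg_left hTle hccq]
  have hNq : (N:ℝ) ^ (1 - q) = c ^ (q - 1) := by
    rw [hc, one_div, Real.inv_rpow (by linarith), ← Real.rpow_neg (by linarith)]
    ring_nf
  rw [tsallisEntropy, lnq, hTV, hNq, mul_div_assoc']
  gcongr
  nlinarith [hS, hDT, hcq]
end

section
/- Let N ≥ 2 be an integer, let q > 1 be a real number, and let p be a probability distribution over [N] such that 1/q ≤ TV(p,ν) ≤ 1 − 1/N. Then H_q(p) ≤ ln_q(N·(1 − TV(p,ν))). -/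
open scoped BigOperators

/-- Tangent line to `x ^ q` at `x0`. -/
lemma tangent_rpow {x x0 q : ℝ} (hx : 0 ≤ x) (hx0 : 0 < x0) (hq : 1 ≤ q) :
    x0 ^ q + q * x0 ^ (q - 1) * (x - x0) ≤ x ^ q := by
  have hs : -1 ≤ x / x0 - 1 := by
    have : 0 ≤ x / x0 := div_nonneg hx hx0.le
    linarith
  have hb := one_add_mul_self_le_rpow_one_add hs hq
  have h1 : (1 : ℝ) + (x / x0 - 1) = x / x0 := by ring
  rw [h1] at hb
  have h2 : (x / x0) ^ q = x ^ q / x0 ^ q := Real.div_rpow hx hx0.le q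
  rw [h2] at hb
  have hx0q : (0 : ℝ) < x0 ^ q := Real.rpow_pos_of_pos hx0 q
  have hb' : (1 + q * (x / x0 - 1)) * x0 ^ q ≤ x ^ q := (le_div_iff₀ hx0q).mp hb
  have hsplit : x0 ^ q = x0 ^ (q - 1) * x0 := by
    rw [← Real.rpow_add_one hx0.ne' (q - 1)]; ring_nf
  calc x0 ^ q + q * x0 ^ (q - 1) * (x - x0)
      = (1 + q * (x / x0 - 1)) * x0 ^ q := by
        rw [hsplit]; field_simp
    _ ≤ x ^ q := hb'

set_option maxHeartbeats 1000000 in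
theorem tsallis_entropy_upper_bound_by_tv (N : ℕ) (hN : 2 ≤ N) (q : ℝ) (hq : 1 < q)
    (p : Fin N → ℝ) (hp0 : ∀ i, 0 ≤ p i) (hp1 : ∑ i, p i = 1)
    (hTV1 : 1 / q ≤ TV p (fun _ => 1 / (N : ℝ)))
    (hTV2 : TV p (fun _ => 1 / (N : ℝ)) ≤ 1 - 1 / (N : ℝ)) :
    tsallisEntropy q p ≤ lnq q ((N : ℝ) * (1 - TV p (fun _ => 1 / (N : ℝ)))) := by
  set t := TV p (fun _ => 1 / (N : ℝ)) with ht
  set n : ℝ := (N : ℝ) with hn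
  have hn2 : (2 : ℝ) ≤ n := by rw [hn]; exact_mod_cast hN
  have hn0 : (0 : ℝ) < n := by linarith
  have hq0 : (0 : ℝ) < q := by linarith
  have ht0 : 0 < t := lt_of_lt_of_le (by positivity) hTV1
  have h1t : 1 / n ≤ 1 - t := by linarith
  have h1t0 : 0 < 1 - t := lt_of_lt_of_le (by positivity) h1t
  set m : ℝ := n * (1 - t) with hm
  have hm1 : 1 ≤ m := by
    rw [hm]
    calc (1 : ℝ) = n * (1 / n) := by field_simp
      _ ≤ n * (1 - t) := by
        apply mul_le_mul_of_nonneg_left h1t hn0.le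
  have hm0 : (0 : ℝ) < m := by linarith
  set x0 : ℝ := m⁻¹ with hx0def
  have hx0 : 0 < x0 := by positivity
  set y : ℝ := x0 ^ (q - 1) with hy
  have hy0 : 0 < y := Real.rpow_pos_of_pos hx0 _
  set c : ℝ := y * ((1 - q) * x0 + q / n) with hc
  set s2 : ℝ := q * y with hs2
  set s1 : ℝ := n * c with hs1
  -- c ≤ 0 from t ≥ 1/q
  have hqt : 1 ≤ q * t := by
    rw [div_le_iff₀ hq0] at hTV1; linarith [hTV1]
  have hx0m : x0 * m = 1 := inv_mul_cancel₀ hm0.ne'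
  have hcle : c ≤ 0 := by
    have hfac : (1 - q) * x0 + q / n ≤ 0 := by
      have h1 : x0 * (n * (1 - t)) = 1 := by rw [← hm]; exact hx0m
      have h2 : q / n = q * (1 - t) * x0 := by
        field_simp
        nlinarith [h1]
      rw [h2]
      have : (1 - q) * x0 + q * (1 - t) * x0 = (q * (1 - t) - (q - 1)) * x0 := by ring
      rw [this]
      apply mul_nonpos_of_nonpos_of_nonneg _ hx0.le
      nlinarith
    exact mul_nonpos_of_nonneg_of_nonpos hy0.le hfac
  -- pointwise bound
  have hpoint : ∀ i, (s1 + s2) / 2 * p i + (c - (s1 + s2) / (2 * n))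
      + (s2 - s1) / 2 * |p i - 1 / n| ≤ p i ^ q := by
    intro i
    rcases le_total (p i) (1 / n) with h | h
    · rw [abs_of_nonpos (by linarith)]
      have hsimp : (s1 + s2) / 2 * p i + (c - (s1 + s2) / (2 * n))
          + (s2 - s1) / 2 * (-(p i - 1 / n)) = s1 * p i + (c - s1 / n) := by
        field_simp
        ring
      rw [hsimp]
      have h1 : c - s1 / n = 0 := by rw [hs1]; field_simp; ring
      rw [h1, add_zero]
      have h2 : s1 * p i ≤ 0 :=
        mul_nonpos_of_nonpos_of_nonneg (mul_nonpos_of_nonneg_of_nonpos hn0.le hcle) (hp0 i)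
      exact le_trans h2 (Real.rpow_nonneg (hp0 i) q)
    · rw [abs_of_nonneg (by linarith)]
      have hsimp : (s1 + s2) / 2 * p i + (c - (s1 + s2) / (2 * n))
          + (s2 - s1) / 2 * (p i - 1 / n) = s2 * p i + (c - s2 / n) := by
        field_simp
        ring
      rw [hsimp]
      have htan := tangent_rpow (hp0 i) hx0 hq.le
      -- s2 * p i + c - s2/n = x0^q + q x0^(q-1) (p i - x0)
      have hx0q : x0 ^ q = x0 * y := by
        rw [hy, mul_comm, ← Real.rpow_add_one hx0.ne' (q - 1)]; ring_nf
      have halg : s2 * p i + (c - s2 / n) = x0 ^ q + q * x0 ^ (q - 1) * (p i - x0) := by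
        rw [hx0q, hs2, hc, ← hy]
        field_simp
        ring
      rw [halg]
      exact htan
  -- summing
  have hsum_abs : ∑ i, |p i - 1 / n| = 2 * t := by
    rw [ht, TV]; ring
  have hkey : y ≤ ∑ i, p i ^ q := by
    have hsumle : ∑ i, ((s1 + s2) / 2 * p i + (c - (s1 + s2) / (2 * n))
        + (s2 - s1) / 2 * |p i - 1 / n|) ≤ ∑ i, p i ^ q :=
      Finset.sum_le_sum (fun i _ => hpoint i)
    have hcard : (Finset.univ : Finset (Fin N)).card = N := by simp
    have hsumeq : ∑ i, ((s1 + s2) / 2 * p i + (c - (s1 + s2) / (2 * n))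
        + (s2 - s1) / 2 * |p i - 1 / n|)
        = (s1 + s2) / 2 * 1 + n * (c - (s1 + s2) / (2 * n)) + (s2 - s1) / 2 * (2 * t) := by
      rw [Finset.sum_add_distrib, Finset.sum_add_distrib, ← Finset.mul_sum, hp1,
        ← Finset.mul_sum, hsum_abs, Finset.sum_const, hcard, nsmul_eq_mul, ← hn]
    rw [hsumeq] at hsumle
    have hfinal : (s1 + s2) / 2 * 1 + n * (c - (s1 + s2) / (2 * n)) + (s2 - s1) / 2 * (2 * t)
        = y := by
      rw [hs1, hs2, hc, hx0def, hm]
      have hn' : n ≠ 0 := hn0.ne'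
      have ht' : (1:ℝ) - t ≠ 0 := h1t0.ne'
      field_simp
      ring
    rw [hfinal] at hsumle
    exact hsumle
  -- conclude
  have hyeq : y = m ^ (1 - q) := by
    rw [hy, hx0def, Real.inv_rpow hm0.le, ← Real.rpow_neg hm0.le,
      show -(q - 1) = 1 - q by ring]
  rw [tsallisEntropy, lnq, ← hyeq]
  have hq1 : 0 < q - 1 := by linarith
  gcongr
end

section
/- Let N ≥ 2 be an integer, let q > 1 be a real number, and let γ be a real number with 1/q ≤ γ ≤ 1 − 1/N. Set k = ⌊N(1−γ)⌋ and ε = N(1−γ) − k, and define p_max : {1,…,N} → ℝ by p_max(i) = 1/N + γ/k for 1 ≤ i ≤ k and p_max(i) = ε/(N(N−k)) for k < i ≤ N. Then p_max is a probability distribution over [N], and for every probability distribution p over [N] with TV(p,ν) ≥ γ one has H_q(p) ≤ H_q(p_max). -/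
open scoped BigOperators

/-- The candidate maximizer of the `q`-Tsallis entropy subject to `TV(p,ν) ≥ γ`:
the first `k = ⌊N(1-γ)⌋` coordinates are `1/N + γ/k`, the rest are `ε/(N(N-k))`,
where `ε = N(1-γ) - k`. -/
noncomputable def pmax (N : ℕ) (γ : ℝ) : Fin N → ℝ := fun i =>
  if (i : ℕ) < ⌊(N : ℝ) * (1 - γ)⌋₊ then
    1 / (N : ℝ) + γ / (⌊(N : ℝ) * (1 - γ)⌋₊ : ℝ)
  else
    ((N : ℝ) * (1 - γ) - (⌊(N : ℝ) * (1 - γ)⌋₊ : ℝ)) /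
      ((N : ℝ) * ((N : ℝ) - (⌊(N : ℝ) * (1 - γ)⌋₊ : ℝ)))

lemma jensen_sum_rpow {α : Type*} (s : Finset α) (hs : s.Nonempty) (f : α → ℝ)
    (hf : ∀ i ∈ s, 0 ≤ f i) {q : ℝ} (hq : 1 ≤ q) :
    (s.card : ℝ) * ((∑ i ∈ s, f i) / s.card) ^ q ≤ ∑ i ∈ s, f i ^ q := by
  have hc : (0:ℝ) < s.card := Nat.cast_pos.mpr hs.card_pos
  have h := Real.rpow_arith_mean_le_arith_mean_rpow s (fun _ => (s.card:ℝ)⁻¹) f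
      (fun i _ => by positivity)
      (by rw [Finset.sum_const, nsmul_eq_mul]; field_simp)
      hf hq
  rw [← Finset.mul_sum, ← Finset.mul_sum] at h
  calc (s.card:ℝ) * ((∑ i ∈ s, f i) / s.card) ^ q
      = s.card * ((s.card:ℝ)⁻¹ * ∑ i ∈ s, f i) ^ q := by rw [inv_mul_eq_div]
    _ ≤ s.card * ((s.card:ℝ)⁻¹ * ∑ i ∈ s, f i ^ q) := by
        exact mul_le_mul_of_nonneg_left h hc.le
    _ = ∑ i ∈ s, f i ^ q := by field_simp

lemma monoE {q ν m c : ℝ} (hq : 1 < q) (hm : 0 < m) (hc : 0 < c) :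
    MonotoneOn (fun e => m * (ν + e / m) ^ q + c * (ν - e / c) ^ q) (Set.Icc 0 (c * ν)) := by
  have hd : ∀ e : ℝ, HasDerivAt (fun e => m * (ν + e / m) ^ q + c * (ν - e / c) ^ q)
      (q * (ν + e / m) ^ (q - 1) - q * (ν - e / c) ^ (q - 1)) e := by
    intro e
    have h1 : HasDerivAt (fun e : ℝ => ν + e / m) (1 / m) e := by
      simpa using ((hasDerivAt_id e).div_const m).const_add ν
    have h2 : HasDerivAt (fun e : ℝ => ν - e / c) (-(1 / c)) e := by
      simpa using ((hasDerivAt_id e).div_const c).const_sub ν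
    have h1' := (h1.rpow_const (Or.inr hq.le)).const_mul m
    have h2' := (h2.rpow_const (Or.inr hq.le)).const_mul c
    refine (h1'.add h2').congr_deriv ?_
    field_simp
    ring
  apply monotoneOn_of_deriv_nonneg (convex_Icc _ _)
  · exact fun e _ => ((hd e).differentiableAt.continuousAt).continuousWithinAt
  · exact fun e _ => (hd e).differentiableAt.differentiableWithinAt
  · intro e he
    rw [interior_Icc] at he
    rw [(hd e).deriv]
    have h0 : 0 ≤ ν - e / c := by
      rw [sub_nonneg, div_le_iff₀ hc]
      linarith [he.2, mul_comm c ν]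
    have hle : ν - e / c ≤ ν + e / m := by
      have h3 : 0 ≤ e / m := div_nonneg he.1.le hm.le
      have h4 : 0 ≤ e / c := div_nonneg he.1.le hc.le
      linarith
    have := Real.rpow_le_rpow h0 hle (by linarith : (0:ℝ) ≤ q - 1)
    nlinarith [this, hq]

lemma gAnti {q n γ : ℝ} (hq : 1 < q) (hn : 0 < n) (hγ0 : 0 < γ)
    (hqγ : 1 ≤ q * γ) :
    AntitoneOn (fun t => t * (1 / n + γ / t) ^ q + (n - t) * (1 / n - γ / (n - t)) ^ q)
      (Set.Icc 1 (n * (1 - γ))) := by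
  have hd : ∀ t ∈ Set.Ioo (1:ℝ) (n * (1 - γ)),
      HasDerivAt (fun t => t * (1 / n + γ / t) ^ q + (n - t) * (1 / n - γ / (n - t)) ^ q)
        ((1 / n + γ / t) ^ (q - 1) * (1 / n - (q - 1) * γ / t)
          - (1 / n - γ / (n - t)) ^ (q - 1) * (1 / n + (q - 1) * γ / (n - t))) t := by
    intro t ht
    have ht0 : 0 < t := by linarith [ht.1]
    have hnt : 0 < n - t := by nlinarith [ht.2, hγ0, hn]
    have hu : 0 < 1 / n + γ / t := by positivity
    have hw : 0 < 1 / n - γ / (n - t) := by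
      rw [sub_pos, div_lt_div_iff₀ hnt hn]
      nlinarith [ht.2]
    have h1 : HasDerivAt (fun t : ℝ => 1 / n + γ / t) (-γ / t ^ 2) t := by
      have := ((hasDerivAt_inv ht0.ne').const_mul γ).const_add (1 / n)
      simpa [div_eq_mul_inv, mul_comm, neg_div] using this
    have h2 : HasDerivAt (fun t : ℝ => 1 / n - γ / (n - t)) (-γ / (n - t) ^ 2) t := by
      have hb : HasDerivAt (fun t : ℝ => n - t) (-1) t := by
        simpa using (hasDerivAt_id t).const_sub n
      have := ((hb.inv hnt.ne').const_mul γ).const_sub (1 / n)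
      rw [show -(γ * (-(-1) / (n - t) ^ 2)) = -γ / (n - t) ^ 2 by ring] at this
      simpa [div_eq_mul_inv] using this
    have h1' := (hasDerivAt_id t).mul (h1.rpow_const (Or.inr hq.le))
    have h3 : HasDerivAt (fun t : ℝ => n - t) (-1) t := by
      simpa using (hasDerivAt_id t).const_sub n
    have h2' := h3.mul (h2.rpow_const (Or.inr hq.le))
    have hsum := h1'.add h2'
    refine hsum.congr_deriv ?_
    have hu' : (1 / n + γ / t) ^ q = (1 / n + γ / t) ^ (q - 1) * (1 / n + γ / t) := by
      rw [← Real.rpow_add_one hu.ne' (q - 1)]; ring_nf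
    have hw' : (1 / n - γ / (n - t)) ^ q
        = (1 / n - γ / (n - t)) ^ (q - 1) * (1 / n - γ / (n - t)) := by
      rw [← Real.rpow_add_one hw.ne' (q - 1)]; ring_nf
    rw [hu', hw']
    field_simp
    simp only [id]
    ring
  apply antitoneOn_of_deriv_nonpos (convex_Icc _ _)
  · apply ContinuousOn.add
    · apply ContinuousOn.mul continuousOn_id
      apply ContinuousOn.rpow_const
      · exact continuousOn_const.add (continuousOn_const.div continuousOn_id
          (fun t ht => by have := ht.1; intro h; linarith))
      · exact fun t ht => Or.inr (by linarith)
    · apply ContinuousOn.mul (continuousOn_const.sub continuousOn_id)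
      apply ContinuousOn.rpow_const
      · refine continuousOn_const.sub (continuousOn_const.div
          (continuousOn_const.sub continuousOn_id) (fun t ht => ?_))
        have h2 := ht.2
        have : n * γ ≤ n - t := by nlinarith [hγ0, hn]
        intro h
        nlinarith [hγ0, hn]
      · exact fun t ht => Or.inr (by linarith)
  · rw [interior_Icc]
    exact fun t ht => (hd t ht).differentiableAt.differentiableWithinAt
  · intro t ht
    rw [interior_Icc] at ht
    rw [(hd t ht).deriv]
    have ht0 : 0 < t := by linarith [ht.1]
    have hnt : 0 < n - t := by nlinarith [ht.2, hγ0, hn]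
    have hu : 0 ≤ 1 / n + γ / t := by positivity
    have hw : 0 ≤ 1 / n - γ / (n - t) := by
      rw [sub_nonneg, div_le_div_iff₀ hnt hn]
      nlinarith [ht.2]
    have hfac1 : 1 / n - (q - 1) * γ / t ≤ 0 := by
      rw [sub_nonpos, div_le_div_iff₀ hn ht0]
      nlinarith [ht.2, hqγ, hn, hγ0]
    have hfac2 : 0 ≤ 1 / n + (q - 1) * γ / (n - t) := by
      have : 0 ≤ (q - 1) * γ / (n - t) :=
        div_nonneg (mul_nonneg (by linarith) hγ0.le) hnt.le
      positivity
    have e1 : (1 / n + γ / t) ^ (q - 1) * (1 / n - (q - 1) * γ / t) ≤ 0 :=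
      mul_nonpos_of_nonneg_of_nonpos (Real.rpow_nonneg hu _) hfac1
    have e2 : 0 ≤ (1 / n - γ / (n - t)) ^ (q - 1) * (1 / n + (q - 1) * γ / (n - t)) :=
      mul_nonneg (Real.rpow_nonneg hw _) hfac2
    linarith

lemma sum_ite_lt_fin {N k : ℕ} (hk : k ≤ N) (a b : ℝ) :
    ∑ i : Fin N, (if (i : ℕ) < k then a else b) = (k : ℝ) * a + ((N : ℝ) - (k : ℝ)) * b := by
  rw [Fin.sum_univ_eq_sum_range (fun i => if i < k then a else b) N,
    ← Finset.sum_range_add_sum_Ico _ hk]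
  have h1 : ∑ i ∈ Finset.range k, (if i < k then a else b) = (k : ℝ) * a := by
    rw [Finset.sum_congr rfl fun i hi => if_pos (Finset.mem_range.mp hi),
      Finset.sum_const, Finset.card_range, nsmul_eq_mul]
  have h2 : ∑ i ∈ Finset.Ico k N, (if i < k then a else b) = ((N : ℝ) - (k : ℝ)) * b := by
    rw [Finset.sum_congr rfl fun i hi => if_neg (not_lt.mpr (Finset.mem_Ico.mp hi).1),
      Finset.sum_const, Nat.card_Ico, nsmul_eq_mul, Nat.cast_sub hk]
  rw [h1, h2]

theorem tsallis_entropy_max_solution (N : ℕ) (hN : 2 ≤ N) (q : ℝ) (hq : 1 < q)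
    (γ : ℝ) (hγ1 : 1 / q ≤ γ) (hγ2 : γ ≤ 1 - 1 / (N : ℝ)) :
    (∀ i, 0 ≤ pmax N γ i) ∧ (∑ i, pmax N γ i) = 1 ∧
    (∀ p : Fin N → ℝ, (∀ i, 0 ≤ p i) → ∑ i, p i = 1 →
      γ ≤ TV p (fun _ => 1 / (N : ℝ)) →
      tsallisEntropy q p ≤ tsallisEntropy q (pmax N γ)) := by
  have hq0 : (0:ℝ) < q := by linarith
  have hn : (0:ℝ) < (N:ℝ) := by
    have : (0:ℕ) < N := by omega
    exact_mod_cast this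
  set n : ℝ := (N : ℝ) with hndef
  have hγ0 : 0 < γ := lt_of_lt_of_le (by positivity) hγ1
  have hqγ : 1 ≤ q * γ := by
    rw [div_le_iff₀ hq0] at hγ1
    linarith [hγ1]
  have hγlt1 : γ < 1 := by
    have : 0 < 1 / n := by positivity
    linarith
  have h1γn : 1 ≤ n * (1 - γ) := by
    have h := mul_le_mul_of_nonneg_left hγ2 hn.le
    have hh : n * (1 / n) = 1 := by field_simp
    nlinarith [h, hh]
  have hx0 : (0:ℝ) ≤ n * (1 - γ) := by linarith
  set k : ℕ := ⌊n * (1 - γ)⌋₊ with hkdef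
  have hk1 : 1 ≤ k := Nat.le_floor (by exact_mod_cast h1γn)
  have hkle : (k:ℝ) ≤ n * (1 - γ) := Nat.floor_le hx0
  have hkltn : (k:ℝ) < n := by nlinarith [hkle, hγ0, hn]
  have hkN : k ≤ N := by have h := hkltn.le; rw [hndef] at h; exact_mod_cast h
  have hk0 : (0:ℝ) < (k:ℝ) := by exact_mod_cast hk1
  have hnk : (0:ℝ) < n - (k:ℝ) := by linarith
  have hε0 : (0:ℝ) ≤ n * (1 - γ) - (k:ℝ) := by linarith
  -- pmax values
  have hBalt : (n * (1 - γ) - (k:ℝ)) / (n * (n - (k:ℝ))) = 1 / n - γ / (n - (k:ℝ)) := by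
    field_simp
    ring
  have hnonneg : ∀ i, 0 ≤ pmax N γ i := by
    intro i
    simp only [pmax, ← hndef, ← hkdef]
    split_ifs
    · positivity
    · exact div_nonneg hε0 (by positivity)
  refine ⟨hnonneg, ?_, ?_⟩
  · have hs := sum_ite_lt_fin hkN (1 / n + γ / (k:ℝ))
      ((n * (1 - γ) - (k:ℝ)) / (n * (n - (k:ℝ))))
    calc ∑ i, pmax N γ i
        = ∑ i : Fin N, (if (i : ℕ) < k then (1 / n + γ / (k:ℝ))
            else ((n * (1 - γ) - (k:ℝ)) / (n * (n - (k:ℝ))))) := by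
          apply Finset.sum_congr rfl
          intro i _
          simp only [pmax, ← hndef, ← hkdef]
      _ = (k:ℝ) * (1 / n + γ / (k:ℝ))
            + (n - (k:ℝ)) * ((n * (1 - γ) - (k:ℝ)) / (n * (n - (k:ℝ)))) := hs
      _ = 1 := by
          rw [hBalt]
          field_simp
          ring
  · intro p hp hsump htv
    classical
    set S : Finset (Fin N) := Finset.univ.filter (fun i => 1 / n < p i) with hSdef
    set Sc : Finset (Fin N) := Finset.univ.filter (fun i => ¬ 1 / n < p i) with hScdef
    set m : ℕ := S.card with hmdef
    set c : ℕ := Sc.card with hcdef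
    set E : ℝ := ∑ i ∈ S, (p i - 1 / n) with hEdef
    have hh : n * (1 / n) = 1 := by field_simp
    have hcard : m + c = N := by
      rw [hmdef, hcdef, hSdef, hScdef, Finset.card_filter_add_card_filter_not,
        Finset.card_univ, Fintype.card_fin]
    have hsum_d : ∑ i, (p i - 1 / n) = 0 := by
      rw [Finset.sum_sub_distrib, hsump, Finset.sum_const, Finset.card_univ, Fintype.card_fin,
        nsmul_eq_mul]
      field_simp
      simp [hndef]
    have hsplit_d : E + ∑ i ∈ Sc, (p i - 1 / n) = 0 := by
      rw [hEdef, hSdef, hScdef, Finset.sum_filter_add_sum_filter_not]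
      exact hsum_d
    have hTV : TV p (fun _ => 1 / n) = E := by
      simp only [TV]
      have habs : ∑ i, |p i - 1 / n| = ∑ i ∈ S, |p i - 1 / n| + ∑ i ∈ Sc, |p i - 1 / n| := by
        rw [hSdef, hScdef, Finset.sum_filter_add_sum_filter_not]
      have hS_abs : ∑ i ∈ S, |p i - 1 / n| = E := by
        rw [hEdef]
        apply Finset.sum_congr rfl
        intro i hi
        rw [hSdef, Finset.mem_filter] at hi
        exact abs_of_pos (by linarith [hi.2])
      have hSc_abs : ∑ i ∈ Sc, |p i - 1 / n| = -∑ i ∈ Sc, (p i - 1 / n) := by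
        rw [← Finset.sum_neg_distrib]
        apply Finset.sum_congr rfl
        intro i hi
        rw [hScdef, Finset.mem_filter] at hi
        have := hi.2
        push_neg at this
        exact abs_of_nonpos (by linarith)
      have hScd : ∑ i ∈ Sc, (p i - 1 / n) = -E := by linarith [hsplit_d]
      rw [habs, hS_abs, hSc_abs, hScd]
      ring
    have hγE : γ ≤ E := by rw [hTV] at htv; exact htv
    have hE0 : 0 < E := lt_of_lt_of_le hγ0 hγE
    have hT1 : ∑ i ∈ S, p i = (m:ℝ) * (1 / n) + E := by
      have h1 : E = ∑ i ∈ S, p i - (m:ℝ) * (1 / n) := by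
        rw [hEdef, Finset.sum_sub_distrib, Finset.sum_const, nsmul_eq_mul, hmdef]
      linarith
    have hT12 : ∑ i ∈ S, p i + ∑ i ∈ Sc, p i = 1 := by
      rw [hSdef, hScdef, Finset.sum_filter_add_sum_filter_not]
      exact hsump
    have hT2 : ∑ i ∈ Sc, p i = 1 - (m:ℝ) * (1 / n) - E := by linarith
    have hT2nonneg : (0:ℝ) ≤ ∑ i ∈ Sc, p i := Finset.sum_nonneg (fun i _ => hp i)
    have hSne : S.Nonempty := by
      rw [Finset.nonempty_iff_ne_empty]
      intro h
      have hE' : E = 0 := by rw [hEdef, h, Finset.sum_empty]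
      linarith
    have hm1 : 0 < m := by rw [hmdef]; exact Finset.card_pos.mpr hSne
    have hm0 : (0:ℝ) < (m:ℝ) := by exact_mod_cast hm1
    have hmn : (m:ℝ) * (1 / n) + E ≤ 1 := by linarith
    have hcR : (c:ℝ) = n - (m:ℝ) := by
      have h := congrArg (fun x : ℕ => (x:ℝ)) hcard
      push_cast at h
      rw [hndef]
      linarith
    have hc0 : (0:ℝ) < (c:ℝ) := by
      rw [hcR]
      have h2 : (m:ℝ) * (1 / n) < 1 := by linarith
      rw [mul_one_div] at h2
      have h3 := (div_lt_one hn).mp h2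
      linarith
    have hc1 : 0 < c := by exact_mod_cast hc0
    have hScne : Sc.Nonempty := by
      rw [hcdef] at hc1
      exact Finset.card_pos.mp hc1
    have hEc : E ≤ (c:ℝ) * (1 / n) := by
      rw [hcR]
      have h2 : (m:ℝ) / n + E ≤ 1 := by rw [div_eq_mul_one_div]; linarith
      rw [sub_mul, mul_one_div, mul_one_div]
      have h3 : E ≤ 1 - (m:ℝ) / n := by linarith
      have h4 : 1 - (m:ℝ) / n = n / n - (m:ℝ) / n := by rw [div_self hn.ne']
      linarith [h4]
    have hJ1 := jensen_sum_rpow S hSne p (fun i _ => hp i) hq.le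
    have hJ2 := jensen_sum_rpow Sc hScne p (fun i _ => hp i) hq.le
    rw [← hmdef] at hJ1
    rw [← hcdef] at hJ2
    have hnm0 : (0:ℝ) < n - (m:ℝ) := hcR ▸ hc0
    have hT1m : (∑ i ∈ S, p i) / (m:ℝ) = 1 / n + E / (m:ℝ) := by
      rw [hT1, add_div, mul_comm, mul_div_assoc, div_self hm0.ne', mul_one]
    have h5 : (∑ i ∈ Sc, p i) = (n - (m:ℝ)) / n - E := by
      rw [hT2, sub_div, div_self hn.ne', mul_one_div]
    have hT2c : (∑ i ∈ Sc, p i) / (c:ℝ) = 1 / n - E / (c:ℝ) := by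
      rw [h5, hcR, sub_div, div_right_comm, div_self hnm0.ne']
    rw [hT1m] at hJ1
    rw [hT2c] at hJ2
    have step1 : (m:ℝ) * (1 / n + E / (m:ℝ)) ^ q + (c:ℝ) * (1 / n - E / (c:ℝ)) ^ q
        ≤ ∑ i, p i ^ q := by
      rw [← Finset.sum_filter_add_sum_filter_not Finset.univ (fun i => 1 / n < p i)
        (fun i => p i ^ q)]
      rw [hSdef] at hJ1
      rw [hScdef] at hJ2
      exact add_le_add hJ1 hJ2
    have step2 : (m:ℝ) * (1 / n + γ / (m:ℝ)) ^ q + (c:ℝ) * (1 / n - γ / (c:ℝ)) ^ q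
        ≤ (m:ℝ) * (1 / n + E / (m:ℝ)) ^ q + (c:ℝ) * (1 / n - E / (c:ℝ)) ^ q := by
      exact monoE hq hm0 hc0 ⟨hγ0.le, le_trans hγE hEc⟩ ⟨hE0.le, hEc⟩ hγE
    have hmR : (m:ℝ) ≤ n * (1 - γ) := by
      have h1 : γ ≤ (c:ℝ) * (1 / n) := le_trans hγE hEc
      rw [hcR, sub_mul, mul_one_div, mul_one_div] at h1
      -- γ ≤ n/n - m/n  ⇒ nγ ≤ n - m ⇒ m ≤ n(1-γ)
      have h4 := mul_le_mul_of_nonneg_left h1 hn.le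
      rw [mul_sub, div_self hn.ne', mul_one, mul_div_cancel₀ _ hn.ne'] at h4
      linarith
    have hmk : m ≤ k := by
      rw [hkdef]
      exact Nat.le_floor hmR
    have step3 : ((k:ℝ)) * (1 / n + γ / (k:ℝ)) ^ q
          + (n - (k:ℝ)) * (1 / n - γ / (n - (k:ℝ))) ^ q
        ≤ (m:ℝ) * (1 / n + γ / (m:ℝ)) ^ q + (c:ℝ) * (1 / n - γ / (c:ℝ)) ^ q := by
      have h := gAnti hq hn hγ0 hqγ
        (⟨by exact_mod_cast hm1, hmR⟩ : (m:ℝ) ∈ Set.Icc 1 (n * (1 - γ)))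
        (⟨by exact_mod_cast hk1, hkle⟩ : (k:ℝ) ∈ Set.Icc 1 (n * (1 - γ)))
        (by exact_mod_cast hmk)
      simp only at h
      rw [hcR]
      exact h
    have hpm : ∑ i, pmax N γ i ^ q
        = (k:ℝ) * (1 / n + γ / (k:ℝ)) ^ q
          + (n - (k:ℝ)) * (1 / n - γ / (n - (k:ℝ))) ^ q := by
      calc ∑ i, pmax N γ i ^ q
          = ∑ i : Fin N, (if (i : ℕ) < k then (1 / n + γ / (k:ℝ)) ^ q
              else ((n * (1 - γ) - (k:ℝ)) / (n * (n - (k:ℝ)))) ^ q) := by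
            apply Finset.sum_congr rfl
            intro i _
            simp only [pmax, ← hndef, ← hkdef, apply_ite (fun x : ℝ => x ^ q)]
        _ = (k:ℝ) * (1 / n + γ / (k:ℝ)) ^ q
              + (n - (k:ℝ)) * (((n * (1 - γ) - (k:ℝ)) / (n * (n - (k:ℝ)))) ^ q) :=
            sum_ite_lt_fin hkN _ _
        _ = _ := by rw [hBalt]
    have hFF : ∑ i, pmax N γ i ^ q ≤ ∑ i, p i ^ q := by
      rw [hpm]
      exact le_trans step3 (le_trans step2 step1)
    simp only [tsallisEntropy]
    exact (div_le_div_iff_of_pos_right (by linarith : (0:ℝ) < q - 1)).mpr (by linarith)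
end

section
/- The functions g₂(n) = 2^{1/(1−n)} − n·2^{−n} and g₃(n) = (n/4)·(n^{1/n} − 2^{1/(1−n)}) are monotonically increasing on [3,∞): for all real numbers n, n' with 3 ≤ n ≤ n', one has g₂(n) ≤ g₂(n') and g₃(n) ≤ g₃(n'). -/
open Real


private lemma log_sq_le (x : ℝ) (hx : 1 ≤ x) : (Real.log x)^2 ≤ x := by
  have hx0 : (0:ℝ) < x := by linarith
  set s := x ^ ((1:ℝ)/4) with hs
  have hs0 : 0 < s := Real.rpow_pos_of_pos hx0 _
  have hs1 : 1 ≤ s := Real.one_le_rpow hx (by norm_num)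
  have hsx : s^(4:ℕ) = x := by
    rw [hs, ← Real.rpow_natCast (x ^ ((1:ℝ)/4)) 4, ← Real.rpow_mul hx0.le]
    norm_num
  have hlog : Real.log x = 4 * Real.log s := by
    rw [hs, Real.log_rpow hx0]; ring
  have h1 : Real.log s ≤ s - 1 := Real.log_le_sub_one_of_pos hs0
  have h2 : Real.log x ≤ s^2 := by
    rw [hlog]; nlinarith [sq_nonneg (s-2)]
  have h3 : 0 ≤ Real.log x := Real.log_nonneg hx
  calc (Real.log x)^2 ≤ (s^2)^2 := by nlinarith
    _ = x := by rw [← hsx]; ring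

private lemma key_poly (x L c : ℝ) (hx : 3 ≤ x) (hL1 : 1 ≤ L) (hL2 : L^2 ≤ x)
    (hc1 : 0.69 ≤ c) (hc2 : c ≤ 0.7) :
    x^2 * ((x-1)^2 + c*x) ≤ ((x+L) * (x+1-L)) * ((x-1+c)*(x-1)) := by
  nlinarith [mul_nonneg (sub_nonneg.2 hL2) (sq_nonneg (x-1)), sq_nonneg (L-1),
    mul_nonneg (sub_nonneg.2 hL2) (by linarith : (0:ℝ) ≤ x - 1),
    mul_pos (by linarith : (0:ℝ) < x) (by linarith : (0:ℝ) < x - 1),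
    mul_nonneg (mul_nonneg (sub_nonneg.2 hL2) (by linarith : (0:ℝ) ≤ x-1)) (by linarith : (0:ℝ) ≤ x-1),
    sq_nonneg (x-3), mul_nonneg (sub_nonneg.2 hL1) (by linarith : (0:ℝ) ≤ x - 1)]

private lemma deriv_nonneg3 (x : ℝ) (hx : 3 ≤ x) :
    0 ≤ (1/4) * (Real.exp (Real.log x * x⁻¹) * ((x + 1 - Real.log x)/x)
      - Real.exp (Real.log 2 * (1-x)⁻¹) * (((x-1)^2 + Real.log 2 * x)/(x-1)^2)) := by
  have hx0 : (0:ℝ) < x := by linarith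
  set L := Real.log x with hL
  set c := Real.log 2 with hc
  set A := Real.exp (L * x⁻¹) with hA'
  set B := Real.exp (c * (1-x)⁻¹) with hB'
  have hc1 : 0.69 ≤ c := by rw [hc]; have := Real.log_two_gt_d9; linarith
  have hc2 : c ≤ 0.7 := by rw [hc]; have := Real.log_two_lt_d9; linarith
  have hL1 : 1 ≤ L := by
    rw [hL]
    have he : Real.exp 1 < x := by
      have := Real.exp_one_lt_d9; linarith
    exact ((Real.lt_log_iff_exp_lt hx0).mpr he).le
  have hL2 : L^2 ≤ x := log_sq_le x (by linarith)
  have hLx : L ≤ x := by nlinarith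
  have hxm1 : (0:ℝ) < x - 1 := by linarith
  have hA : (x + L)/x ≤ A := by
    have h := Real.add_one_le_exp (L * x⁻¹)
    rw [hA']
    have : (x + L)/x = L * x⁻¹ + 1 := by field_simp; ring
    linarith [this ▸ h]
  have hB : B ≤ (x-1)/(x-1+c) := by
    have he : c * (1-x)⁻¹ = -(c/(x-1)) := by
      rw [show (1:ℝ)-x = -(x-1) by ring, inv_neg]; ring
    have ht : (0:ℝ) < c/(x-1) := by positivity
    have h1 : 1 + c/(x-1) ≤ Real.exp (c/(x-1)) := by
      linarith [Real.add_one_le_exp (c/(x-1))]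
    have h2 : B = (Real.exp (c/(x-1)))⁻¹ := by rw [hB', he, Real.exp_neg]
    rw [h2]
    have h3 : (Real.exp (c/(x-1)))⁻¹ ≤ (1 + c/(x-1))⁻¹ := by
      apply inv_anti₀ (by linarith) h1
    have h4 : (1 + c/(x-1))⁻¹ = (x-1)/(x-1+c) := by
      rw [inv_eq_one_div]; field_simp
    linarith [h4 ▸ h3]
  have hQ : (0:ℝ) ≤ ((x-1)^2 + c * x)/(x-1)^2 := by
    apply div_nonneg (by nlinarith) (by positivity)
  have hR : (0:ℝ) ≤ (x + 1 - L)/x := by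
    apply div_nonneg (by linarith) hx0.le
  have step1 : B * (((x-1)^2 + c * x)/(x-1)^2) ≤ ((x-1)/(x-1+c)) * (((x-1)^2 + c * x)/(x-1)^2) :=
    mul_le_mul_of_nonneg_right hB hQ
  have step2 : ((x-1)/(x-1+c)) * (((x-1)^2 + c * x)/(x-1)^2) ≤ ((x+L)/x) * ((x+1-L)/x) := by
    have e1 : ((x-1)/(x-1+c)) * (((x-1)^2 + c * x)/(x-1)^2)
        = ((x-1)^2 + c*x) / ((x-1+c)*(x-1)) := by
      field_simp
    have e2 : ((x+L)/x) * ((x+1-L)/x) = ((x+L)*(x+1-L)) / x^2 := by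
      rw [div_mul_div_comm, sq]
    rw [e1, e2, div_le_div_iff₀ (by positivity) (by positivity)]
    nlinarith [key_poly x L c hx hL1 hL2 hc1 hc2]
  have step3 : ((x+L)/x) * ((x+1-L)/x) ≤ A * ((x + 1 - L)/x) :=
    mul_le_mul_of_nonneg_right hA hR
  have : B * (((x-1)^2 + c * x)/(x-1)^2) ≤ A * ((x + 1 - L)/x) := by linarith
  linarith


private lemma deriv_eq_aux (x A B L c : ℝ) (hx : x ≠ 0) (h1 : x - 1 ≠ 0) :
    1 / 4 * (A - B) + x / 4 * (A * (x⁻¹ * x⁻¹ + L * -(x ^ 2)⁻¹) - B * (c * (- -1 / (1 - x) ^ 2)))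
    = (1/4) * (A * ((x + 1 - L)/x) - B * (((x-1)^2 + c * x)/(x-1)^2)) := by
  rw [show (1-x)^2 = (x-1)^2 by ring]
  field_simp
  ring

noncomputable def f3 : ℝ → ℝ :=
  fun x => x/4 * (Real.exp (Real.log x * x⁻¹) - Real.exp (Real.log 2 * (1-x)⁻¹))

private lemma hasD (x : ℝ) (hx : 3 ≤ x) :
    HasDerivAt f3 ((1/4) * (Real.exp (Real.log x * x⁻¹) * ((x + 1 - Real.log x)/x)
      - Real.exp (Real.log 2 * (1-x)⁻¹) * (((x-1)^2 + Real.log 2 * x)/(x-1)^2))) x := by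
  have hx0 : (0:ℝ) < x := by linarith
  have h1x : (1:ℝ) - x ≠ 0 := by intro h; nlinarith
  have hinv : HasDerivAt (fun y : ℝ => y⁻¹) (-(x^2)⁻¹) x := hasDerivAt_inv hx0.ne'
  have hu : HasDerivAt (fun y : ℝ => Real.log y * y⁻¹)
      (x⁻¹ * x⁻¹ + Real.log x * (-(x^2)⁻¹)) x :=
    (Real.hasDerivAt_log hx0.ne').mul hinv
  have h1x' : HasDerivAt (fun y : ℝ => (1 - y)⁻¹) (-(-1)/(1-x)^2) x :=
    ((hasDerivAt_id x).const_sub 1).inv h1x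
  have hv : HasDerivAt (fun y : ℝ => Real.log 2 * (1-y)⁻¹)
      (Real.log 2 * (-(-1)/(1-x)^2)) x := h1x'.const_mul _
  have hf := ((hasDerivAt_id x).div_const 4).mul (hu.exp.sub hv.exp)
  exact hf.congr_deriv (deriv_eq_aux x _ _ (Real.log x) (Real.log 2) hx0.ne'
    (by intro h; apply h1x; linarith))


private lemma g2_mono (n n' : ℝ) (hn : 3 ≤ n) (h : n ≤ n') :
    (2 : ℝ) ^ (1 / (1 - n)) - n * (2 : ℝ) ^ (-n) ≤
      (2 : ℝ) ^ (1 / (1 - n')) - n' * (2 : ℝ) ^ (-n') := by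
  have hn0 : (0:ℝ) < n := by linarith
  have hn'0 : (0:ℝ) < n' := by linarith
  have h1 : (2 : ℝ) ^ (1 / (1 - n)) ≤ (2 : ℝ) ^ (1 / (1 - n')) := by
    apply Real.rpow_le_rpow_left_iff (x := 2) one_lt_two |>.mpr
    have e1 : 1 / (1 - n) = -(1/(n-1)) := by
      rw [← one_div_neg_eq_neg_one_div]; ring_nf
    have e2 : 1 / (1 - n') = -(1/(n'-1)) := by
      rw [← one_div_neg_eq_neg_one_div]; ring_nf
    rw [e1, e2, neg_le_neg_iff]
    exact one_div_le_one_div_of_le (by linarith) (by linarith)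
  have h2 : n' * (2 : ℝ) ^ (-n') ≤ n * (2 : ℝ) ^ (-n) := by
    have key : ∀ m : ℝ, 0 < m → m * (2 : ℝ) ^ (-m) = Real.exp (Real.log m - m * Real.log 2) := by
      intro m hm
      rw [Real.rpow_def_of_pos two_pos, Real.exp_sub, Real.exp_log hm,
        show Real.log 2 * -m = -(m * Real.log 2) by ring, Real.exp_neg, div_eq_mul_inv]
    rw [key n hn0, key n' hn'0, Real.exp_le_exp]
    have hlog : Real.log n' - Real.log n ≤ (n' - n) / 3 := by
      have : Real.log n' - Real.log n = Real.log (n'/n) := (Real.log_div hn'0.ne' hn0.ne').symm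
      rw [this]
      have h3 : Real.log (n'/n) ≤ n'/n - 1 := Real.log_le_sub_one_of_pos (by positivity)
      have h4 : n'/n - 1 = (n' - n)/n := by field_simp
      have h5 : (n' - n)/n ≤ (n' - n)/3 := by
        have : (0:ℝ) ≤ n' - n := by linarith
        gcongr
      linarith
    have hl2 : (1:ℝ)/3 < Real.log 2 := by
      have := Real.log_two_gt_d9; linarith
    nlinarith [sub_nonneg.2 h]
  linarith


private lemma f3_mono : MonotoneOn f3 (Set.Ici 3) := by
  apply monotoneOn_of_deriv_nonneg (convex_Ici 3)
  · exact fun x hx => ((hasD x hx).differentiableAt.continuousAt).continuousWithinAt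
  · rw [interior_Ici]
    exact fun x hx => ((hasD x (le_of_lt hx)).differentiableAt).differentiableWithinAt
  · rw [interior_Ici]
    intro x hx
    rw [(hasD x (le_of_lt hx)).deriv]
    exact deriv_nonneg3 x (le_of_lt hx)

private lemma f3_repr (m : ℝ) (hm : 3 ≤ m) :
    (m/4) * (m ^ (1/m) - (2:ℝ) ^ (1/(1-m))) = f3 m := by
  have hm0 : (0:ℝ) < m := by linarith
  show _ = m/4 * (Real.exp (Real.log m * m⁻¹) - Real.exp (Real.log 2 * (1-m)⁻¹))
  rw [Real.rpow_def_of_pos hm0, Real.rpow_def_of_pos two_pos, one_div, one_div]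

theorem g2_g3_monotone :
    (∀ n n' : ℝ, 3 ≤ n → n ≤ n' →
      (2 : ℝ) ^ (1 / (1 - n)) - n * (2 : ℝ) ^ (-n) ≤
        (2 : ℝ) ^ (1 / (1 - n')) - n' * (2 : ℝ) ^ (-n')) ∧
    (∀ n n' : ℝ, 3 ≤ n → n ≤ n' →
      (n / 4) * (n ^ (1 / n) - (2 : ℝ) ^ (1 / (1 - n))) ≤
        (n' / 4) * (n' ^ (1 / n') - (2 : ℝ) ^ (1 / (1 - n')))) := by
  constructor
  · exact g2_mono
  · intro n n' hn h
    have hn' : 3 ≤ n' := le_trans hn h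
    rw [f3_repr n hn, f3_repr n' hn']
    exact f3_mono hn hn' h
end

section
/- The function x ↦ x·(x^{1/x} − 1) is monotonically non-decreasing on [2,∞): for all real numbers x, y with 2 ≤ x ≤ y, one has x·(x^{1/x} − 1) ≤ y·(y^{1/y} − 1). -/
open Real Set

lemma exp_ge_sq' {t : ℝ} (ht : 0 ≤ t) : t ^ 2 ≤ Real.exp t := by
  have h6 : 1 + t / 6 ≤ Real.exp (t / 6) := by linarith [Real.add_one_le_exp (t/6)]
  have hcube : t ≤ (1 + t / 6) ^ 3 := by nlinarith [sq_nonneg (t - 3)]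
  have h1 : (1 + t / 6) ^ 3 ≤ Real.exp (t / 6) ^ 3 :=
    pow_le_pow_left₀ (by positivity) h6 3
  have h2 : Real.exp (t / 6) ^ 6 = Real.exp t := by
    rw [← Real.exp_nat_mul]; congr 1; push_cast; ring
  have h3 : t ^ 2 ≤ ((1 + t / 6) ^ 3) ^ 2 := by
    have := hcube
    nlinarith [hcube, ht]
  calc t ^ 2 ≤ ((1 + t / 6) ^ 3) ^ 2 := h3
    _ ≤ (Real.exp (t / 6) ^ 3) ^ 2 := by
        have h0 : (0:ℝ) ≤ (1 + t / 6) ^ 3 := by positivity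
        nlinarith [h1, h0]
    _ = Real.exp (t / 6) ^ 6 := by ring
    _ = Real.exp t := h2

lemma key_ineq {x : ℝ} (hx : 2 ≤ x) :
    x ≤ Real.exp (Real.log x / x) * (x + 1 - Real.log x) := by
  set t := Real.log x with ht
  have hx0 : (0:ℝ) < x := by linarith
  have ht0 : 0 ≤ t := Real.log_nonneg (by linarith)
  have htx : t ≤ x - 1 := by
    have := Real.log_le_sub_one_of_pos hx0
    linarith
  have hxt : t ^ 2 ≤ x := by
    have := exp_ge_sq' ht0
    rwa [ht, Real.exp_log hx0] at this
  have hexp : 1 + t / x ≤ Real.exp (t / x) := by linarith [Real.add_one_le_exp (t/x)]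
  have hfac : (0:ℝ) < x + 1 - t := by linarith
  have hstep : x ≤ (1 + t / x) * (x + 1 - t) := by
    have heq : (1 + t / x) * (x + 1 - t) = ((x + t) * (x + 1 - t)) / x := by
      field_simp
    rw [heq, le_div_iff₀ hx0]
    nlinarith
  calc x ≤ (1 + t / x) * (x + 1 - t) := hstep
    _ ≤ Real.exp (t / x) * (x + 1 - t) := by
        apply mul_le_mul_of_nonneg_right hexp hfac.le

lemma hasDeriv_g4 {x : ℝ} (hx : 0 < x) :
    HasDerivAt (fun z : ℝ => z * (z ^ (1 / z) - 1))
      (Real.exp (Real.log x / x) * (x + 1 - Real.log x) / x - 1) x := by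
  have hlog : HasDerivAt Real.log x⁻¹ x := Real.hasDerivAt_log hx.ne'
  have hdiv : HasDerivAt (fun z : ℝ => Real.log z / z)
      ((x⁻¹ * x - Real.log x * 1) / x ^ 2) x := hlog.div (hasDerivAt_id x) hx.ne'
  have hexp := hdiv.exp
  have hF : HasDerivAt (fun z : ℝ => z * (Real.exp (Real.log z / z) - 1))
      (1 * (Real.exp (Real.log x / x) - 1) +
        x * (Real.exp (Real.log x / x) * ((x⁻¹ * x - Real.log x * 1) / x ^ 2))) x :=
    (hasDerivAt_id x).mul (hexp.sub_const 1)
  have hev : (fun z : ℝ => z * (z ^ (1 / z) - 1)) =ᶠ[nhds x]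
      (fun z : ℝ => z * (Real.exp (Real.log z / z) - 1)) := by
    filter_upwards [eventually_gt_nhds hx] with z hz
    rw [Real.rpow_def_of_pos hz, mul_one_div]
  have := hF.congr_of_eventuallyEq hev
  refine this.congr_deriv ?_
  field_simp
  ring

theorem g4_monotone (x y : ℝ) (hx : 2 ≤ x) (hxy : x ≤ y) :
    x * (x ^ (1 / x) - 1) ≤ y * (y ^ (1 / y) - 1) := by
  have hmono : MonotoneOn (fun z : ℝ => z * (z ^ (1 / z) - 1)) (Set.Ici 2) := by
    apply monotoneOn_of_deriv_nonneg (convex_Ici 2)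
    · intro z hz
      have hz0 : (0:ℝ) < z := by
        have : (2:ℝ) ≤ z := hz
        linarith
      exact (hasDeriv_g4 hz0).continuousAt.continuousWithinAt
    · intro z hz
      rw [interior_Ici] at hz
      have hz0 : (0:ℝ) < z := by
        have : (2:ℝ) < z := hz
        linarith
      exact (hasDeriv_g4 hz0).differentiableAt.differentiableWithinAt
    · intro z hz
      rw [interior_Ici] at hz
      have hz2 : (2:ℝ) ≤ z := le_of_lt hz
      have hz0 : (0:ℝ) < z := by linarith
      rw [(hasDeriv_g4 hz0).deriv]
      have hk := key_ineq hz2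
      have : 1 ≤ Real.exp (Real.log z / z) * (z + 1 - Real.log z) / z := by
        rw [le_div_iff₀ hz0]; linarith
      linarith
  exact hmono (by exact hx) (le_trans hx hxy) hxy
end

section
/- Let q be a real number with 1 < q ≤ 2 and let t ∈ [0,1]. Then (1−t)^q + (1+t)^q ≥ 2 + q(q−1)·t². -/
theorem rpow_sum_lower_bound (q t : ℝ) (hq1 : 1 < q) (hq2 : q ≤ 2)
    (ht : t ∈ Set.Icc (0 : ℝ) 1) :
    2 + q * (q - 1) * t ^ 2 ≤ (1 - t) ^ q + (1 + t) ^ q := by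
  obtain ⟨ht0, ht1⟩ := ht
  have hq0 : (0 : ℝ) < q := by linarith
  set c : ℝ := q * (q - 1) with hc
  have hcpos : 0 < c := by
    have : 0 < q - 1 := by linarith
    positivity
  set F : ℝ → ℝ := fun x => (1 - x) ^ q + (1 + x) ^ q - c * x ^ 2 with hF
  set D : ℝ → ℝ := fun x => q * (1 + x) ^ (q - 1) - q * (1 - x) ^ (q - 1) - 2 * c * x with hD
  -- F has derivative D on Ioo (-1) 1
  have hFd : ∀ x ∈ Set.Ioo (-1:ℝ) 1, HasDerivAt F (D x) x := by
    intro x hx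
    have h1 : (1 - x) ≠ 0 := by have := hx.2; intro h; linarith [sub_eq_zero.mp h]
    have h2 : (1 + x) ≠ 0 := by have := hx.1; intro h; nlinarith
    have d1 : HasDerivAt (fun y : ℝ => (1 - y) ^ q) ((-1) * q * (1 - x) ^ (q - 1)) x := by
      have : HasDerivAt (fun y : ℝ => 1 - y) (-1) x := (hasDerivAt_id x).const_sub 1
      exact this.rpow_const (Or.inl h1)
    have d2 : HasDerivAt (fun y : ℝ => (1 + y) ^ q) (1 * q * (1 + x) ^ (q - 1)) x := by
      have : HasDerivAt (fun y : ℝ => 1 + y) 1 x := (hasDerivAt_id x).const_add 1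
      exact this.rpow_const (Or.inl h2)
    have d3 : HasDerivAt (fun y : ℝ => c * y ^ 2) (c * (2 * x)) x := by
      have : HasDerivAt (fun y : ℝ => y ^ 2) (2 * x) x := by
        simpa using (hasDerivAt_pow 2 x)
      exact this.const_mul c
    have := (d1.add d2).sub d3
    refine this.congr_deriv ?_
    simp only [hD]
    ring
  -- D has derivative E on Ioo (-1) 1
  set E : ℝ → ℝ := fun x => c * (1 + x) ^ (q - 2) + c * (1 - x) ^ (q - 2) - 2 * c with hE
  have hDd : ∀ x ∈ Set.Ioo (-1:ℝ) 1, HasDerivAt D (E x) x := by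
    intro x hx
    have h1 : (1 - x) ≠ 0 := by have := hx.2; intro h; linarith [sub_eq_zero.mp h]
    have h2 : (1 + x) ≠ 0 := by have := hx.1; intro h; nlinarith
    have d1 : HasDerivAt (fun y : ℝ => (1 - y) ^ (q - 1)) ((-1) * (q - 1) * (1 - x) ^ (q - 1 - 1)) x := by
      have : HasDerivAt (fun y : ℝ => 1 - y) (-1) x := (hasDerivAt_id x).const_sub 1
      exact this.rpow_const (Or.inl h1)
    have d2 : HasDerivAt (fun y : ℝ => (1 + y) ^ (q - 1)) (1 * (q - 1) * (1 + x) ^ (q - 1 - 1)) x := by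
      have : HasDerivAt (fun y : ℝ => 1 + y) 1 x := (hasDerivAt_id x).const_add 1
      exact this.rpow_const (Or.inl h2)
    have d3 : HasDerivAt (fun y : ℝ => 2 * c * y) (2 * c) x := by
      simpa using (hasDerivAt_id x).const_mul (2 * c)
    have := ((d2.const_mul q).sub (d1.const_mul q)).sub d3
    refine this.congr_deriv ?_
    simp only [hE, hc]
    have e1 : q - 1 - 1 = q - 2 := by ring
    rw [e1]
    ring
  -- E is nonneg on Ioo 0 1
  have hE0 : ∀ x ∈ Set.Ioo (0:ℝ) 1, 0 ≤ E x := by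
    intro x hx
    have hx0 := hx.1
    have hx1 := hx.2
    have hb1 : (0:ℝ) < 1 - x := by linarith
    have hb2 : (0:ℝ) < 1 + x := by linarith
    set a : ℝ := (1 - x) ^ (q - 2) with ha
    set b : ℝ := (1 + x) ^ (q - 2) with hb
    have hap : 0 < a := Real.rpow_pos_of_pos hb1 _
    have hbp : 0 < b := Real.rpow_pos_of_pos hb2 _
    have hab : 1 ≤ a * b := by
      rw [ha, hb, ← Real.mul_rpow hb1.le hb2.le]
      apply Real.one_le_rpow_of_pos_of_le_one_of_nonpos
      · nlinarith
      · nlinarith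
      · linarith
    have h2ab : 2 ≤ a + b := by nlinarith [sq_nonneg (a - b), sq_nonneg (a + b - 2)]
    simp only [hE]
    have : c * b + c * a - 2 * c = c * (a + b - 2) := by ring
    rw [this]
    have : 0 ≤ a + b - 2 := by linarith
    positivity
  -- D is monotone on Ico 0 1, hence nonneg (D 0 = 0)
  have hIcoIoo : Set.Ico (0:ℝ) 1 ⊆ Set.Ioo (-1:ℝ) 1 := fun y hy => ⟨by linarith [hy.1], hy.2⟩
  have hDmono : MonotoneOn D (Set.Ico (0:ℝ) 1) := by
    apply monotoneOn_of_deriv_nonneg (convex_Ico 0 1)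
    · exact fun y hy => ((hDd y (hIcoIoo hy)).continuousAt).continuousWithinAt
    · intro y hy
      rw [interior_Ico] at hy
      exact ((hDd y (hIcoIoo (Set.Ioo_subset_Ico_self hy))).differentiableAt).differentiableWithinAt
    · intro y hy
      rw [interior_Ico] at hy
      rw [(hDd y (hIcoIoo (Set.Ioo_subset_Ico_self hy))).deriv]
      exact hE0 y hy
  have hD0 : D 0 = 0 := by
    simp [hD, Real.one_rpow]
  have hDnonneg : ∀ x ∈ Set.Ioo (0:ℝ) 1, 0 ≤ D x := by
    intro x hx
    have := hDmono (Set.mem_Ico.mpr ⟨le_refl 0, by norm_num⟩) (Set.mem_Ico.mpr ⟨hx.1.le, hx.2⟩) hx.1.le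
    rw [hD0] at this
    exact this
  -- F is continuous on ℝ
  have hFc : Continuous F := by
    have hr : Continuous (fun x : ℝ => x ^ q) := Real.continuous_rpow_const hq0.le
    exact ((hr.comp (continuous_const.sub continuous_id)).add
      (hr.comp (continuous_const.add continuous_id))).sub (by continuity)
  -- F is monotone on Icc 0 1
  have hFmono : MonotoneOn F (Set.Icc (0:ℝ) 1) := by
    apply monotoneOn_of_deriv_nonneg (convex_Icc 0 1) hFc.continuousOn
    · intro y hy
      rw [interior_Icc] at hy
      exact ((hFd y ⟨by linarith [hy.1], hy.2⟩).differentiableAt).differentiableWithinAt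
    · intro y hy
      rw [interior_Icc] at hy
      rw [(hFd y ⟨by linarith [hy.1], hy.2⟩).deriv]
      exact hDnonneg y hy
  have hF0 : F 0 = 2 := by
    simp [hF, Real.one_rpow]
    norm_num
  have := hFmono (Set.mem_Icc.mpr ⟨le_refl 0, by norm_num⟩) (Set.mem_Icc.mpr ⟨ht0, ht1⟩) ht0
  rw [hF0] at this
  simp only [hF] at this
  linarith
end
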